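/- arXiv:1901.03403 — 8 statements merged into one kernel-verified Lean document; each statement's English description precedes it below -/
import Mathlib

section
/- For the standard normal density φ with CDF Φ, the function η(x) = φ(x)²/(Φ(x)(1 - Φ(x))) attains its maximum uniquely at x = 0, with value η(0) = 2/π. -/
open MeasureTheory Set Real

noncomputable def gphi (x : ℝ) : ℝ := Real.exp (-x ^ 2 / 2) / Real.sqrt (2 * π)

lemma gphi_eq (x : ℝ) : gphi x = Real.exp (-(1/2) * x ^ 2) / Real.sqrt (2 * π) := by
  unfold gphi; ring_nf

lemma gphi_pos (x : ℝ) : 0 < gphi x :=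
  div_pos (Real.exp_pos _) (Real.sqrt_pos.2 (by positivity))

lemma gphi_even (x : ℝ) : gphi (-x) = gphi x := by unfold gphi; ring_nf

lemma continuous_gphi : Continuous gphi := by
  unfold gphi; fun_prop

lemma integrable_gphi : Integrable gphi := by
  simp only [funext gphi_eq]
  exact (integrable_exp_neg_mul_sq (by norm_num : (0:ℝ) < 1/2)).div_const _

lemma integral_gphi : ∫ x, gphi x = 1 := by
  simp only [funext gphi_eq]
  rw [integral_div, integral_gaussian]
  rw [div_eq_one_iff_eq (by positivity)]
  norm_num [mul_comm]

noncomputable def gPhi (x : ℝ) : ℝ := ∫ t in Iic x, gphi t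

lemma gPhi_reflect (x : ℝ) : gPhi (-x) = 1 - gPhi x := by
  have key : gPhi x + gPhi (-x) = 1 := by
    have h1 : gPhi (-x) = ∫ t in Ioi x, gphi t := by
      unfold gPhi
      rw [← integral_comp_neg_Ioi]
      simp only [gphi_even]
    rw [h1, ← integral_gphi]
    unfold gPhi
    rw [← setIntegral_union (Iic_disjoint_Ioi le_rfl) measurableSet_Ioi
      (integrable_gphi.integrableOn) (integrable_gphi.integrableOn)]
    rw [Iic_union_Ioi, Measure.restrict_univ]
  linarith

lemma gPhi_zero : gPhi 0 = 1/2 := by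
  have := gPhi_reflect 0
  rw [neg_zero] at this
  linarith

lemma gPhi_sub (a b : ℝ) : gPhi b - gPhi a = ∫ t in a..b, gphi t := by
  unfold gPhi
  exact intervalIntegral.integral_Iic_sub_Iic integrable_gphi.integrableOn integrable_gphi.integrableOn

lemma gPhi_mono : StrictMono gPhi := by
  intro a b hab
  have : gPhi b - gPhi a = ∫ t in a..b, gphi t := gPhi_sub a b
  have hpos : 0 < ∫ t in a..b, gphi t :=
    intervalIntegral.intervalIntegral_pos_of_pos
      (integrable_gphi.intervalIntegrable) (fun x => gphi_pos x) hab
  linarith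

lemma gPhi_nonneg (x : ℝ) : 0 ≤ gPhi x :=
  setIntegral_nonneg measurableSet_Iic (fun t _ => (gphi_pos t).le)

lemma gPhi_pos (x : ℝ) : 0 < gPhi x := by
  have := gPhi_mono (show x - 1 < x by linarith)
  have := gPhi_nonneg (x - 1)
  linarith

lemma gPhi_lt_one (x : ℝ) : gPhi x < 1 := by
  have := gPhi_pos (-x)
  rw [gPhi_reflect] at this
  linarith

lemma hasDerivAt_gPhi (x : ℝ) : HasDerivAt gPhi (gphi x) x := by
  have : ∀ y, gPhi y = gPhi 0 + ∫ t in (0:ℝ)..y, gphi t := by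
    intro y; have := gPhi_sub 0 y; linarith
  rw [funext this]
  exact ((intervalIntegral.integral_hasDerivAt_right
    (integrable_gphi.intervalIntegrable)
    (continuous_gphi.stronglyMeasurableAtFilter _ _)
    continuous_gphi.continuousAt).const_add (gPhi 0))

lemma hasDerivAt_gphi (x : ℝ) : HasDerivAt gphi (-x * gphi x) x := by
  have h1 : HasDerivAt (fun x : ℝ => -x ^ 2 / 2) (-x) x := by
    have := ((hasDerivAt_pow 2 x).neg).div_const 2
    simpa using this.congr_deriv (by ring)
  have := ((h1.exp).div_const (Real.sqrt (2 * π)))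
  unfold gphi
  convert this using 1
  · rfl
  · rfl
  ring

lemma tendsto_gPhi_atTop : Filter.Tendsto gPhi Filter.atTop (nhds 1) := by
  have h := tendsto_setIntegral_of_monotone (f := gphi) (μ := volume)
    (s := fun x : ℝ => Iic x) (fun i => measurableSet_Iic)
    (fun a b hab => Iic_subset_Iic.2 hab)
    (by rw [iUnion_Iic]; exact integrable_gphi.integrableOn)
  rw [iUnion_Iic, Measure.restrict_univ, integral_gphi] at h
  exact h

lemma tendsto_sq_half_atTop : Filter.Tendsto (fun x : ℝ => x ^ 2 / 2) Filter.atTop Filter.atTop :=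
  (Filter.tendsto_pow_atTop two_ne_zero).atTop_div_const (by norm_num)

lemma tendsto_gphi_atTop : Filter.Tendsto gphi Filter.atTop (nhds 0) := by
  unfold gphi
  have h1 : Filter.Tendsto (fun x : ℝ => Real.exp (-x ^ 2 / 2)) Filter.atTop (nhds 0) := by
    have := Real.tendsto_exp_atBot.comp (Filter.tendsto_neg_atBot_iff.mpr tendsto_sq_half_atTop)
    refine this.congr (fun x => ?_)
    simp [Function.comp, neg_div]
  simpa using h1.div_const (Real.sqrt (2 * π))

lemma tendsto_mul_gphi_atTop :
    Filter.Tendsto (fun x : ℝ => x * gphi x) Filter.atTop (nhds 0) := by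
  have base := tendsto_rpow_mul_exp_neg_mul_atTop_nhds_zero (1/2) 1 one_pos
  have base2 : Filter.Tendsto (fun y : ℝ => Real.sqrt 2 * (y ^ (1/2 : ℝ) * Real.exp (-1 * y)))
      Filter.atTop (nhds 0) := by simpa using base.const_mul (Real.sqrt 2)
  have comp := base2.comp tendsto_sq_half_atTop
  have hx : ∀ᶠ x : ℝ in Filter.atTop,
      ((fun y : ℝ => Real.sqrt 2 * (y ^ (1/2 : ℝ) * Real.exp (-1 * y))) ∘
        (fun x : ℝ => x ^ 2 / 2)) x = x * Real.exp (-x ^ 2 / 2) := by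
    filter_upwards [Filter.eventually_ge_atTop (0:ℝ)] with x hx
    simp only [Function.comp]
    rw [← Real.sqrt_eq_rpow, show (-1:ℝ) * (x^2/2) = -x^2/2 by ring, ← mul_assoc,
      ← Real.sqrt_mul (by norm_num : (0:ℝ) ≤ 2), show (2:ℝ)*(x^2/2) = x^2 by ring,
      Real.sqrt_sq hx]
  unfold gphi
  simp only [div_eq_mul_inv, ← mul_assoc]
  have := (comp.congr' hx).mul_const (Real.sqrt (2 * π))⁻¹
  rw [zero_mul] at this
  refine this.congr (fun x => ?_)
  ring_nf

noncomputable def gh (x : ℝ) : ℝ := 1 - 2 * gPhi x + π * x * gphi x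
noncomputable def gg (x : ℝ) : ℝ := gPhi x * (1 - gPhi x) - π / 2 * gphi x ^ 2

lemma gphi_zero_sq : gphi 0 ^ 2 = 1 / (2 * π) := by
  unfold gphi
  rw [div_pow, Real.sq_sqrt (by positivity)]
  norm_num

lemma gh_zero : gh 0 = 0 := by unfold gh; rw [gPhi_zero]; ring

lemma gg_zero : gg 0 = 0 := by
  unfold gg
  rw [gPhi_zero, gphi_zero_sq]
  field_simp
  ring

lemma hasDerivAt_gh (x : ℝ) : HasDerivAt gh (gphi x * ((π - 2) - π * x ^ 2)) x := by
  have h1 : HasDerivAt (fun y : ℝ => 1 - 2 * gPhi y) (-(2 * gphi x)) x := by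
    simpa using (((hasDerivAt_gPhi x).const_mul 2).const_sub 1)
  have h2 : HasDerivAt (fun y : ℝ => π * (y * gphi y))
      (π * (1 * gphi x + x * (-x * gphi x))) x :=
    ((hasDerivAt_id x).mul (hasDerivAt_gphi x)).const_mul π
  have := h1.add h2
  refine (this.congr_deriv (by ring)).congr_of_eventuallyEq ?_
  filter_upwards with y
  unfold gh; simp only [Pi.add_apply]; ring

lemma hasDerivAt_gg (x : ℝ) : HasDerivAt gg (gphi x * gh x) x := by
  have h1 : HasDerivAt (fun y : ℝ => gPhi y * (1 - gPhi y))
      (gphi x * (1 - gPhi x) + gPhi x * (-(gphi x))) x :=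
    (hasDerivAt_gPhi x).mul ((hasDerivAt_gPhi x).const_sub 1)
  have h2 : HasDerivAt (fun y : ℝ => π / 2 * gphi y ^ 2)
      (π / 2 * (2 * gphi x ^ 1 * (-x * gphi x))) x :=
    (((hasDerivAt_gphi x).pow 2).const_mul (π / 2))
  have := h1.sub h2
  refine (this.congr_deriv ?_).congr_of_eventuallyEq ?_
  · unfold gh; ring
  · filter_upwards with y
    unfold gg; simp only [Pi.sub_apply]

lemma continuous_gg : Continuous gg :=
  continuous_iff_continuousAt.2 fun x => (hasDerivAt_gg x).continuousAt

lemma continuous_gh : Continuous gh :=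
  continuous_iff_continuousAt.2 fun x => (hasDerivAt_gh x).continuousAt

lemma tendsto_gh_atTop : Filter.Tendsto gh Filter.atTop (nhds (-1)) := by
  have : Filter.Tendsto (fun x => 1 - 2 * gPhi x + π * x * gphi x) Filter.atTop
      (nhds (1 - 2 * 1 + π * 0)) := by
    have h2 : Filter.Tendsto (fun x : ℝ => π * x * gphi x) Filter.atTop (nhds (π * 0)) := by
      have := tendsto_mul_gphi_atTop.const_mul π
      refine this.congr (fun x => by ring)
    exact ((tendsto_const_nhds.sub (tendsto_gPhi_atTop.const_mul 2)).add h2)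
  rw [show (1:ℝ) - 2 * 1 + π * 0 = -1 by ring] at this
  exact this

lemma tendsto_gg_atTop : Filter.Tendsto gg Filter.atTop (nhds 0) := by
  have : Filter.Tendsto (fun x => gPhi x * (1 - gPhi x) - π / 2 * gphi x ^ 2) Filter.atTop
      (nhds (1 * (1 - 1) - π / 2 * 0 ^ 2)) := by
    exact (tendsto_gPhi_atTop.mul (tendsto_const_nhds.sub tendsto_gPhi_atTop)).sub
      (((tendsto_gphi_atTop.pow 2)).const_mul (π / 2))
  rw [show (1:ℝ) * (1 - 1) - π / 2 * 0 ^ 2 = 0 by ring] at this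
  exact this

noncomputable def ga : ℝ := Real.sqrt ((π - 2) / π)

lemma pi_gt_two : (2:ℝ) < π := by linarith [Real.pi_gt_three]

lemma ga_pos : 0 < ga :=
  Real.sqrt_pos.2 (div_pos (by linarith [pi_gt_two]) Real.pi_pos)

lemma ga_sq : ga ^ 2 = (π - 2) / π :=
  Real.sq_sqrt (le_of_lt (div_pos (by linarith [pi_gt_two]) Real.pi_pos))

lemma gh_strictMonoOn : StrictMonoOn gh (Icc 0 ga) := by
  apply strictMonoOn_of_deriv_pos (convex_Icc _ _) continuous_gh.continuousOn
  intro x hx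
  rw [interior_Icc] at hx
  rw [(hasDerivAt_gh x).deriv]
  have hx2 : x ^ 2 < (π - 2) / π := by
    rw [← ga_sq]
    exact pow_lt_pow_left₀ hx.2 hx.1.le two_ne_zero
  rw [lt_div_iff₀ Real.pi_pos] at hx2
  exact mul_pos (gphi_pos x) (by nlinarith [Real.pi_pos])

lemma gh_strictAntiOn : StrictAntiOn gh (Ici ga) := by
  apply strictAntiOn_of_deriv_neg (convex_Ici _) continuous_gh.continuousOn
  intro x hx
  rw [interior_Ici] at hx
  rw [(hasDerivAt_gh x).deriv]
  have hga : ga ^ 2 < x ^ 2 := pow_lt_pow_left₀ hx ga_pos.le two_ne_zero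
  rw [ga_sq, div_lt_iff₀ Real.pi_pos] at hga
  exact mul_neg_of_pos_of_neg (gphi_pos x) (by nlinarith [Real.pi_pos])

lemma exists_x0 : ∃ x₀, ga < x₀ ∧ gh x₀ = 0 ∧
    (∀ x, 0 < x → x < x₀ → 0 < gh x) ∧ (∀ x, x₀ < x → gh x < 0) := by
  have hga0 : 0 < gh ga := by
    have := gh_strictMonoOn (left_mem_Icc.2 ga_pos.le) (right_mem_Icc.2 ga_pos.le) ga_pos
    rwa [gh_zero] at this
  have hev : ∀ᶠ x : ℝ in Filter.atTop, gh x < 0 :=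
    tendsto_gh_atTop.eventually_lt_const (by norm_num : (-1:ℝ) < 0)
  obtain ⟨b, hb1, hb2⟩ := (hev.and (Filter.eventually_ge_atTop ga)).exists
  have hsub := intermediate_value_Icc' hb2 continuous_gh.continuousOn
  have h0mem : (0:ℝ) ∈ Icc (gh b) (gh ga) := ⟨hb1.le, hga0.le⟩
  obtain ⟨x₀, hx₀mem, hx₀⟩ := hsub h0mem
  have hgax₀ : ga < x₀ := by
    rcases lt_or_eq_of_le hx₀mem.1 with h | h
    · exact h
    · exfalso; rw [h, hx₀] at hga0; exact lt_irrefl 0 hga0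
  refine ⟨x₀, hgax₀, hx₀, ?_, ?_⟩
  · intro x hx hxlt
    by_cases hle : x ≤ ga
    · have := gh_strictMonoOn (left_mem_Icc.2 ga_pos.le) ⟨hx.le, hle⟩ hx
      rwa [gh_zero] at this
    · push_neg at hle
      have := gh_strictAntiOn hle.le (le_trans hle.le hxlt.le) hxlt
      rwa [hx₀] at this
  · intro x hxgt
    have := gh_strictAntiOn hgax₀.le (le_trans hgax₀.le hxgt.le) hxgt
    rwa [hx₀] at this

lemma gg_even (x : ℝ) : gg (-x) = gg x := by
  unfold gg
  rw [gPhi_reflect, gphi_even]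
  ring

lemma gg_pos_of_pos : ∀ x : ℝ, 0 < x → 0 < gg x := by
  obtain ⟨x₀, hgax₀, hzero, hpos, hneg⟩ := exists_x0
  have x₀pos : 0 < x₀ := lt_trans ga_pos hgax₀
  have mono : StrictMonoOn gg (Icc 0 x₀) := by
    apply strictMonoOn_of_deriv_pos (convex_Icc _ _) continuous_gg.continuousOn
    intro x hx; rw [interior_Icc] at hx
    rw [(hasDerivAt_gg x).deriv]
    exact mul_pos (gphi_pos x) (hpos x hx.1 hx.2)
  have anti : StrictAntiOn gg (Ici x₀) := by
    apply strictAntiOn_of_deriv_neg (convex_Ici _) continuous_gg.continuousOn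
    intro x hx; rw [interior_Ici] at hx
    rw [(hasDerivAt_gg x).deriv]
    exact mul_neg_of_pos_of_neg (gphi_pos x) (hneg x hx)
  have key : ∀ y, x₀ ≤ y → 0 ≤ gg y := by
    intro y hy
    refine le_of_tendsto tendsto_gg_atTop ?_
    filter_upwards [Filter.eventually_ge_atTop y] with z hz
    exact anti.antitoneOn hy (le_trans hy hz) hz
  intro x hx
  by_cases hle : x ≤ x₀
  · have := mono ⟨le_rfl, x₀pos.le⟩ ⟨hx.le, hle⟩ hx
    rwa [gg_zero] at this
  · push_neg at hle
    have h1 := anti hle.le (by linarith : x₀ ≤ x + 1) (by linarith : x < x + 1)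
    have h2 := key (x + 1) (by linarith)
    linarith

lemma gg_pos : ∀ x : ℝ, x ≠ 0 → 0 < gg x := by
  intro x hx
  rcases lt_or_gt_of_ne hx with h | h
  · rw [← neg_neg x, gg_even]
    exact gg_pos_of_pos (-x) (by linarith)
  · exact gg_pos_of_pos x h

/-- For the standard normal density `φ` with CDF `Φ`, the function
`η(x) = φ(x)²/(Φ(x)(1-Φ(x)))` attains its maximum uniquely at `x = 0`, with
value `η(0) = 2/π`. -/
theorem eta_gaussian_max
    (φ Φ η : ℝ → ℝ)
    (hφ : ∀ x, φ x = Real.exp (-x ^ 2 / 2) / Real.sqrt (2 * π))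
    (hΦ : ∀ x, Φ x = ∫ t in Iic x, φ t)
    (hη : ∀ x, η x = φ x ^ 2 / (Φ x * (1 - Φ x))) :
    η 0 = 2 / π ∧ ∀ x : ℝ, x ≠ 0 → η x < η 0 := by
  have hφg : ∀ x, φ x = gphi x := hφ
  have hΦg : ∀ x, Φ x = gPhi x := by
    intro x
    rw [hΦ x]
    unfold gPhi
    exact setIntegral_congr_fun measurableSet_Iic (fun t _ => hφg t)
  have hη0 : η 0 = 2 / π := by
    rw [hη 0, hΦg 0, gPhi_zero, hφg 0, gphi_zero_sq]
    have hπ : π ≠ 0 := Real.pi_ne_zero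
    field_simp
    ring
  refine ⟨hη0, fun x hx => ?_⟩
  rw [hη x, hΦg x, hφg x, hη0]
  have hgg := gg_pos x hx
  have hN : 0 < gphi x ^ 2 := pow_pos (gphi_pos x) 2
  have hD : π / 2 * gphi x ^ 2 < gPhi x * (1 - gPhi x) := by
    unfold gg at hgg; linarith
  have hD0 : 0 < π / 2 * gphi x ^ 2 := by
    have := Real.pi_pos; positivity
  calc gphi x ^ 2 / (gPhi x * (1 - gPhi x)) < gphi x ^ 2 / (π / 2 * gphi x ^ 2) :=
        div_lt_div_of_pos_left hN hD0 hD
    _ = 2 / π := by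
        rw [div_eq_div_iff (by positivity) Real.pi_ne_zero]
        ring
end

section
/- Let f be a log-concave symmetric probability density with CDF F such that η(x) = f(x)²/(F(x)(1-F(x))) is non-increasing in |x| with maximum at 0. Then η(x) → 0 as |x| → ∞. -/
open MeasureTheory Set Filter

/-- For a log-concave symmetric probability density `f` with full
support, with `η(x) = f(x)²/(F(x)(1-F(x)))` non-increasing in `|x|` and maximal
at `0`, one has `η(x) → 0` as `|x| → ∞`. -/
theorem eta_tendsto_zero
    (f F η : ℝ → ℝ)
    (hf_pos : ∀ x, 0 < f x)
    (hf_int : Integrable f)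
    (hf_mass : ∫ x, f x = 1)
    (hf_symm : ∀ x, f (-x) = f x)
    (hf_logconc : ∀ x y : ℝ, ∀ a b : ℝ, 0 ≤ a → 0 ≤ b → a + b = 1 →
      f x ^ a * f y ^ b ≤ f (a * x + b * y))
    (hF : ∀ x, F x = ∫ t in Iic x, f t)
    (hη : ∀ x, η x = f x ^ 2 / (F x * (1 - F x)))
    (hη_mono : ∀ x y : ℝ, |x| ≤ |y| → η y ≤ η x)
    (hη_max : ∀ x : ℝ, x ≠ 0 → η x < η 0) :
    Tendsto η atTop (nhds 0) ∧ Tendsto η atBot (nhds 0) := by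
  have hf_nonneg : ∀ x, 0 ≤ f x := fun x => (hf_pos x).le
  set G : ℝ → ℝ := fun x => ∫ t in Ioi x, f t with hGdef
  -- positivity of set integrals of f over sets of positive measure
  have hpos_int : ∀ s : Set ℝ, MeasurableSet s → volume s ≠ 0 → 0 < ∫ t in s, f t := by
    intro s hs h0
    rw [setIntegral_pos_iff_support_of_nonneg_ae
      (Eventually.of_forall hf_nonneg : 0 ≤ᵐ[volume.restrict s] f) hf_int.integrableOn]
    have : Function.support f = univ := by
      ext x; simp [Function.mem_support, (hf_pos x).ne']
    rw [this, univ_inter]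
    exact h0.bot_lt
  have hFpos : ∀ x, 0 < F x := by
    intro x
    rw [hF x]
    exact hpos_int _ measurableSet_Iic (by simp [Real.volume_Iic])
  have hGpos : ∀ x, 0 < G x := by
    intro x
    exact hpos_int _ measurableSet_Ioi (by simp [Real.volume_Ioi])
  have hFG : ∀ x, F x + G x = 1 := by
    intro x
    rw [hF x]
    show (∫ t in Iic x, f t) + (∫ t in Ioi x, f t) = 1
    rw [intervalIntegral.integral_Iic_add_Ioi hf_int.integrableOn hf_int.integrableOn, hf_mass]
  have hG1F : ∀ x, G x = 1 - F x := fun x => by linarith [hFG x]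
  have hGanti : ∀ x y : ℝ, x ≤ y → G y ≤ G x := by
    intro x y hxy
    exact setIntegral_mono_set hf_int.integrableOn
      (Eventually.of_forall hf_nonneg) (HasSubset.Subset.eventuallyLE (Ioi_subset_Ioi hxy))
  have hFmono : ∀ x y : ℝ, x ≤ y → F x ≤ F y := by
    intro x y hxy
    rw [hF x, hF y]
    exact setIntegral_mono_set hf_int.integrableOn
      (Eventually.of_forall hf_nonneg) (HasSubset.Subset.eventuallyLE (Iic_subset_Iic.2 hxy))
  -- difference of G as an integral
  have hGdiff : ∀ x y : ℝ, x ≤ y → G x - G y = ∫ t in Ioc x y, f t := by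
    intro x y hxy
    have hu : Ioc x y ∪ Ioi y = Ioi x := Ioc_union_Ioi_eq_Ioi hxy
    have : G x = (∫ t in Ioc x y, f t) + G y := by
      show (∫ t in Ioi x, f t) = (∫ t in Ioc x y, f t) + ∫ t in Ioi y, f t
      rw [← hu, setIntegral_union (by simp [disjoint_left]) measurableSet_Ioi
        hf_int.integrableOn hf_int.integrableOn]
    linarith
  have hηpos : ∀ x, 0 < η x := by
    intro x
    rw [hη x, ← hG1F x]
    exact div_pos (pow_pos (hf_pos x) 2) (mul_pos (hFpos x) (hGpos x))
  -- key: η gets below any ε somewhere on [0,∞)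
  have key : ∀ ε : ℝ, 0 < ε → ∃ X : ℝ, 0 ≤ X ∧ η X < ε := by
    intro ε hε
    by_contra hcon
    push_neg at hcon
    have hc : ∀ x : ℝ, 0 ≤ x → ε ≤ η x := fun x hx => hcon x hx
    set c : ℝ := Real.sqrt (ε * F 0) with hcdef
    have hcpos : 0 < c := Real.sqrt_pos.2 (mul_pos hε (hFpos 0))
    -- lower bound f x ≥ c √(G x) for x ≥ 0
    have hfb : ∀ x : ℝ, 0 ≤ x → c * Real.sqrt (G x) ≤ f x := by
      intro x hx
      have h1 : ε ≤ f x ^ 2 / (F x * G x) := by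
        rw [hG1F x] at *; rw [← hη x]; exact hc x hx
      have hD : 0 < F x * G x := mul_pos (hFpos x) (hGpos x)
      have h2 : ε * (F x * G x) ≤ f x ^ 2 := by
        rw [← le_div_iff₀ hD]; exact h1
      have h3 : ε * F 0 * G x ≤ f x ^ 2 := by
        have := mul_le_mul_of_nonneg_left (hFmono 0 x hx) hε.le
        nlinarith [hGpos x]
      calc c * Real.sqrt (G x) = Real.sqrt (ε * F 0 * G x) := by
            rw [hcdef, ← Real.sqrt_mul (mul_pos hε (hFpos 0)).le]
        _ ≤ Real.sqrt (f x ^ 2) := Real.sqrt_le_sqrt h3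
        _ = f x := Real.sqrt_sq (hf_nonneg x)
    -- halving step
    have halve : ∀ x : ℝ, 0 ≤ x → G (x + 2 * Real.sqrt (G x) / c) ≤ G x / 2 := by
      intro x hx
      set g : ℝ := G x with hg
      have hgpos : 0 < g := hGpos x
      set d : ℝ := 2 * Real.sqrt g / c with hd
      have hdpos : 0 < d := by positivity
      set y : ℝ := x + d with hy
      have hxy : x ≤ y := by simp [hy, hdpos.le]
      by_contra hcon2
      push_neg at hcon2
      -- hcon2 : g/2 < G y
      have hpt : ∀ t ∈ Ioc x y, c * Real.sqrt (G y) ≤ f t := by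
        intro t ht
        have ht0 : 0 ≤ t := le_trans hx ht.1.le
        calc c * Real.sqrt (G y) ≤ c * Real.sqrt (G t) := by
              apply mul_le_mul_of_nonneg_left _ hcpos.le
              exact Real.sqrt_le_sqrt (hGanti t y ht.2)
          _ ≤ f t := hfb t ht0
      have hIconst : ∫ t in Ioc x y, (c * Real.sqrt (G y)) =
          d * (c * Real.sqrt (G y)) := by
        rw [setIntegral_const]
        rw [measureReal_def, Real.volume_Ioc]
        rw [ENNReal.toReal_ofReal (by linarith : (0:ℝ) ≤ y - x)]
        simp [hy]
      have hle : d * (c * Real.sqrt (G y)) ≤ ∫ t in Ioc x y, f t := by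
        rw [← hIconst]
        apply setIntegral_mono_on (integrableOn_const (by simp [Real.volume_Ioc]))
          hf_int.integrableOn measurableSet_Ioc hpt
      have hsum : (∫ t in Ioc x y, f t) ≤ g := by
        have := hGdiff x y hxy
        have := hGpos y
        linarith
      -- but d * c * √(G y) > g
      have hdc : d * c = 2 * Real.sqrt g := by
        rw [hd, div_mul_cancel₀ _ hcpos.ne']
      have hsq2 : Real.sqrt (g / 2) < Real.sqrt (G y) :=
        Real.sqrt_lt_sqrt (by positivity) hcon2
      have hbig : g < d * (c * Real.sqrt (G y)) := by
        have h4 : g ≤ 2 * Real.sqrt g * Real.sqrt (g / 2) := by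
          have e1 : Real.sqrt g * Real.sqrt (g / 2) = Real.sqrt (g * (g/2)) :=
            (Real.sqrt_mul hgpos.le _).symm
          nlinarith [Real.sq_sqrt (by positivity : (0:ℝ) ≤ g * (g/2)),
            Real.sqrt_nonneg (g * (g/2)), sq_nonneg (Real.sqrt (g * (g/2)) - g),
            hgpos]
        have h5 : 2 * Real.sqrt g * Real.sqrt (g / 2) < 2 * Real.sqrt g * Real.sqrt (G y) := by
          apply mul_lt_mul_of_pos_left hsq2
          positivity
        calc g ≤ 2 * Real.sqrt g * Real.sqrt (g/2) := h4
          _ < 2 * Real.sqrt g * Real.sqrt (G y) := h5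
          _ = d * (c * Real.sqrt (G y)) := by rw [← mul_assoc, hdc]
      linarith
    -- iterate the halving
    set r : ℝ := Real.sqrt (1/2) with hr
    have hr0 : 0 < r := Real.sqrt_pos.2 (by norm_num)
    have hr1 : r < 1 := by
      rw [hr, show (1:ℝ) = Real.sqrt 1 by simp]
      exact Real.sqrt_lt_sqrt (by norm_num) (by norm_num)
    set B : ℝ := 2 * Real.sqrt (G 0) / c with hB
    have hBpos : 0 < B := div_pos (mul_pos two_pos (Real.sqrt_pos.2 (hGpos 0))) hcpos
    set seq : ℕ → ℝ := fun n => Nat.rec 0 (fun _ xn => xn + 2 * Real.sqrt (G xn) / c) n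
      with hseq
    have hseq0 : seq 0 = 0 := rfl
    have hseqS : ∀ n, seq (n+1) = seq n + 2 * Real.sqrt (G (seq n)) / c := fun n => rfl
    have hinv : ∀ n : ℕ, 0 ≤ seq n ∧ Real.sqrt (G (seq n)) ≤ Real.sqrt (G 0) * r ^ n := by
      intro n
      induction n with
      | zero => constructor
                · simp [hseq0]
                · simp [hseq0]
      | succ n ih =>
        obtain ⟨ih1, ih2⟩ := ih
        constructor
        · rw [hseqS]; have h2s : 0 ≤ 2 * Real.sqrt (G (seq n)) / c := by positivity
          linarith
        · have h1 : G (seq (n+1)) ≤ G (seq n) / 2 := by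
            rw [hseqS]; exact halve (seq n) ih1
          have h2 : Real.sqrt (G (seq (n+1))) ≤ Real.sqrt (G (seq n)) * r := by
            calc Real.sqrt (G (seq (n+1))) ≤ Real.sqrt (G (seq n) / 2) :=
                  Real.sqrt_le_sqrt h1
              _ = Real.sqrt (G (seq n)) * r := by
                  rw [hr, show G (seq n) / 2 = G (seq n) * (1/2) by ring,
                    Real.sqrt_mul (hGpos (seq n)).le]
          calc Real.sqrt (G (seq (n+1))) ≤ Real.sqrt (G (seq n)) * r := h2
            _ ≤ (Real.sqrt (G 0) * r ^ n) * r := by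
                apply mul_le_mul_of_nonneg_right ih2 hr0.le
            _ = Real.sqrt (G 0) * r ^ (n+1) := by ring
    -- bound the sequence
    have hbound : ∀ n : ℕ, seq n ≤ B / (1 - r) * (1 - r ^ n) := by
      intro n
      induction n with
      | zero => simp [hseq0]
      | succ n ih =>
        have step : 2 * Real.sqrt (G (seq n)) / c ≤ B * r ^ n := by
          rw [hB, div_mul_eq_mul_div, div_le_div_iff_of_pos_right hcpos]
          have h9 := (hinv n).2
          nlinarith
        rw [hseqS]
        have h1r : 0 < 1 - r := by linarith
        calc seq n + 2 * Real.sqrt (G (seq n)) / c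
            ≤ B / (1 - r) * (1 - r ^ n) + B * r ^ n := by linarith
          _ = B / (1 - r) * (1 - r ^ (n+1)) := by field_simp; ring
    have hM : ∀ n : ℕ, seq n ≤ B / (1 - r) := by
      intro n
      have := hbound n
      have h1r : 0 < 1 - r := by linarith
      have : B / (1 - r) * (1 - r ^ n) ≤ B / (1 - r) * 1 := by
        apply mul_le_mul_of_nonneg_left _ (by positivity)
        have : 0 ≤ r ^ n := by positivity
        linarith
      linarith [hbound n]
    set M : ℝ := B / (1 - r) with hMdef
    -- G M > 0, but G M ≤ G (seq n) ≤ (√G0 * r^n)^2 → contradiction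
    have hGM : 0 < Real.sqrt (G M) := Real.sqrt_pos.2 (hGpos M)
    obtain ⟨n, hn⟩ := exists_pow_lt_of_lt_one
      (div_pos hGM (Real.sqrt_pos.2 (hGpos 0))) hr1
    have h6 : Real.sqrt (G M) ≤ Real.sqrt (G (seq n)) :=
      Real.sqrt_le_sqrt (hGanti (seq n) M (hM n))
    have h7 : Real.sqrt (G (seq n)) ≤ Real.sqrt (G 0) * r ^ n := (hinv n).2
    have h8 : Real.sqrt (G 0) * r ^ n < Real.sqrt (G M) := by
      have hG0 : 0 < Real.sqrt (G 0) := Real.sqrt_pos.2 (hGpos 0)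
      rw [div_eq_mul_inv] at hn
      calc Real.sqrt (G 0) * r ^ n < Real.sqrt (G 0) * (Real.sqrt (G M) * (Real.sqrt (G 0))⁻¹) :=
            by exact mul_lt_mul_of_pos_left hn hG0
        _ = Real.sqrt (G M) := by field_simp
    linarith
  -- now conclude the tendsto statements
  have hTop : Tendsto η atTop (nhds 0) := by
    rw [Metric.tendsto_atTop]
    intro ε hε
    obtain ⟨X, hX0, hXε⟩ := key ε hε
    refine ⟨X, fun x hx => ?_⟩
    rw [Real.dist_eq, sub_zero, abs_of_pos (hηpos x)]
    have : η x ≤ η X := by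
      apply hη_mono
      rw [abs_of_nonneg hX0, abs_of_nonneg (le_trans hX0 hx)]
      exact hx
    linarith
  have heven : ∀ x : ℝ, η (-x) = η x :=
    fun x => le_antisymm (hη_mono x (-x) (by simp)) (hη_mono (-x) x (by simp))
  refine ⟨hTop, ?_⟩
  have : Tendsto (fun x => η (-x)) atBot (nhds 0) := hTop.comp tendsto_neg_atBot_atTop
  simpa only [heven] using this
end

section
/- Let f be a symmetric log-concave probability density with CDF F such that the function η_δ(x) = f(x)^{2+δ}/(F(x)(1-F(x)))^{1+δ} is non-increasing in |x| for δ = 0. Then for any x₁ ≥ x₂ ≥ ... ≥ xₙ, writing D = Σᵢ (-1)^{i+1} f(xᵢ) and S = Σᵢ (-1)^{i+1} F(xᵢ), one has D²/(S(1 - S)) ≤ maxᵢ η(xᵢ) ≤ 4 f(0)², provided 0 < S < 1. -/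
open MeasureTheory Set Finset


namespace AltSum

section Basics
variable {f : ℝ → ℝ}

lemma F_diff (hf_int : Integrable f) {a b : ℝ} (hab : a ≤ b) :
    (∫ t in Iic b, f t) = (∫ t in Iic a, f t) + ∫ t in Ioc a b, f t := by
  rw [← Set.Iic_union_Ioc_eq_Iic hab,
    setIntegral_union (Set.Iic_disjoint_Ioc le_rfl) measurableSet_Ioc
      hf_int.integrableOn hf_int.integrableOn]

lemma F_mono (hf_nonneg : ∀ x, 0 ≤ f x) (hf_int : Integrable f) {a b : ℝ} (hab : a ≤ b) :
    (∫ t in Iic a, f t) ≤ ∫ t in Iic b, f t := by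
  rw [F_diff hf_int hab]
  have : 0 ≤ ∫ t in Ioc a b, f t := setIntegral_nonneg measurableSet_Ioc (fun t _ => hf_nonneg t)
  linarith

lemma F_nonneg (hf_nonneg : ∀ x, 0 ≤ f x) (a : ℝ) :
    0 ≤ ∫ t in Iic a, f t :=
  setIntegral_nonneg measurableSet_Iic (fun t _ => hf_nonneg t)

lemma F_compl (hf_int : Integrable f) (hf_mass : ∫ x, f x = 1) (a : ℝ) :
    (∫ t in Ioi a, f t) = 1 - ∫ t in Iic a, f t := by
  have h := MeasureTheory.integral_add_compl (measurableSet_Iic (a := a)) hf_int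
  rw [Set.compl_Iic] at h
  linarith [h.trans hf_mass]

lemma F_le_one (hf_nonneg : ∀ x, 0 ≤ f x) (hf_int : Integrable f)
    (hf_mass : ∫ x, f x = 1) (a : ℝ) :
    (∫ t in Iic a, f t) ≤ 1 := by
  have h := F_compl hf_int hf_mass a
  have : 0 ≤ ∫ t in Ioi a, f t := setIntegral_nonneg measurableSet_Ioi (fun t _ => hf_nonneg t)
  linarith

lemma F_neg (hf_int : Integrable f) (hf_mass : ∫ x, f x = 1)
    (hf_symm : ∀ x, f (-x) = f x) (a : ℝ) :
    (∫ t in Iic (-a), f t) = 1 - ∫ t in Iic a, f t := by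
  have h1 : (∫ t in Iic (-a), f t) = ∫ t in Iic (-a), (fun u => f (-u)) t := by
    apply setIntegral_congr_fun measurableSet_Iic
    intro t _; simp [hf_symm]
  rw [h1, integral_comp_neg_Iic, neg_neg, F_compl hf_int hf_mass]

end Basics

section Logconc
variable {f : ℝ → ℝ}

lemma integrable_shift (hf_int : Integrable f) (e : ℝ) :
    Integrable (fun t => f (t + e)) := by
  have h : Measure.map (· + e) (volume : Measure ℝ) = volume :=
    (measurePreserving_add_right volume e).map_eq
  exact Integrable.comp_measurable (by rw [h]; exact hf_int) (measurable_add_const e)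

lemma shift_Iic (c e : ℝ) : (∫ t in Iic c, f (t + e)) = ∫ t in Iic (c + e), f t := by
  have h := (measurePreserving_add_right (volume : Measure ℝ) e).setIntegral_preimage_emb
    (MeasurableEquiv.addRight e).measurableEmbedding f (Iic (c + e))
  have hpre : ((fun x => x + e) : ℝ → ℝ) ⁻¹' (Iic (c + e)) = Iic c := by
    ext t
    simp only [Set.mem_preimage, Set.mem_Iic]
    constructor <;> intro ht <;> linarith
  rw [hpre] at h
  exact h

/-- pointwise two-point log-concavity consequence -/
lemma logconc_pair (hf_nonneg : ∀ x, 0 ≤ f x)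
    (hf_logconc : ∀ x y : ℝ, ∀ a b : ℝ, 0 ≤ a → 0 ≤ b → a + b = 1 →
      f x ^ a * f y ^ b ≤ f (a * x + b * y))
    {t c b : ℝ} (h1 : t ≤ c) (h2 : c ≤ b) :
    f b * f t ≤ f c * f (t + (b - c)) := by
  rcases eq_or_lt_of_le h1 with rfl | h1
  · simp only [add_sub_cancel]
    exact le_of_eq (mul_comm _ _)
  rcases eq_or_lt_of_le h2 with rfl | h2
  · simp
  rcases eq_or_lt_of_le (hf_nonneg t) with ht0 | ht0
  · rw [← ht0, mul_zero]
    exact mul_nonneg (hf_nonneg c) (hf_nonneg _)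
  rcases eq_or_lt_of_le (hf_nonneg b) with hb0 | hb0
  · rw [← hb0]
    simp only [zero_mul]
    exact mul_nonneg (hf_nonneg c) (hf_nonneg _)
  set l : ℝ := (b - c)/(b - t) with hl
  have hbt : 0 < b - t := by linarith
  have hl0 : 0 ≤ l := div_nonneg (by linarith) (by linarith)
  have hl1 : 0 ≤ 1 - l := by
    have : l ≤ 1 := by
      rw [hl, div_le_one hbt]; linarith
    linarith
  have key1 : f t ^ l * f b ^ (1 - l) ≤ f c := by
    have h := hf_logconc t b l (1 - l) hl0 hl1 (by ring)
    have harg : l * t + (1 - l) * b = c := by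
      rw [hl]; field_simp
      ring
    rwa [harg] at h
  have key2 : f t ^ (1 - l) * f b ^ l ≤ f (t + (b - c)) := by
    have h := hf_logconc t b (1 - l) l hl1 hl0 (by ring)
    have harg : (1 - l) * t + l * b = t + (b - c) := by
      rw [hl]; field_simp
      ring
    rwa [harg] at h
  have hprod : (f t ^ l * f b ^ (1 - l)) * (f t ^ (1 - l) * f b ^ l) = f b * f t := by
    rw [show (f t ^ l * f b ^ (1 - l)) * (f t ^ (1 - l) * f b ^ l)
        = (f t ^ l * f t ^ (1 - l)) * (f b ^ (1 - l) * f b ^ l) by ring,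
      ← Real.rpow_add ht0, ← Real.rpow_add hb0]
    norm_num
    ring
  calc f b * f t = (f t ^ l * f b ^ (1 - l)) * (f t ^ (1 - l) * f b ^ l) := hprod.symm
    _ ≤ f c * f (t + (b - c)) := by
        apply mul_le_mul key1 key2 (mul_nonneg (Real.rpow_nonneg (hf_nonneg t) _)
          (Real.rpow_nonneg (hf_nonneg b) _)) (hf_nonneg c)

/-- reverse hazard: f b * F c ≤ f c * F b for c ≤ b -/
lemma ratio_fF (hf_nonneg : ∀ x, 0 ≤ f x) (hf_int : Integrable f)
    (hf_logconc : ∀ x y : ℝ, ∀ a b : ℝ, 0 ≤ a → 0 ≤ b → a + b = 1 →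
      f x ^ a * f y ^ b ≤ f (a * x + b * y))
    {c b : ℝ} (hcb : c ≤ b) :
    f b * ∫ t in Iic c, f t ≤ f c * ∫ t in Iic b, f t := by
  have step1 : f b * ∫ t in Iic c, f t = ∫ t in Iic c, f b * f t := by
    rw [integral_const_mul]
  have step3 : (∫ t in Iic c, f c * f (t + (b - c))) = f c * ∫ t in Iic b, f t := by
    rw [integral_const_mul, shift_Iic]
    norm_num
  rw [step1, ← step3]
  apply setIntegral_mono_on (hf_int.const_mul _).integrableOn
    (((integrable_shift hf_int (b - c)).const_mul _).integrableOn) measurableSet_Iic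
  intro t ht
  exact logconc_pair hf_nonneg hf_logconc ht.out hcb

end Logconc

lemma integral_exp_decay {κ : ℝ} (hκ : 0 < κ) (p q : ℝ) :
    ∫ t in p..q, Real.exp (-κ * (t - p)) = (1 - Real.exp (-κ * (q - p))) / κ := by
  have hderiv : ∀ t ∈ uIcc p q,
      HasDerivAt (fun u => -(Real.exp (-κ * (u - p)) / κ)) (Real.exp (-κ * (t - p))) t := by
    intro t _
    have h1 : HasDerivAt (fun u : ℝ => -κ * (u - p)) (-κ) t := by
      simpa using (((hasDerivAt_id t).sub_const p).const_mul (-κ))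
    have h3 := ((h1.exp).div_const κ).neg
    refine h3.congr_deriv ?_
    field_simp
  have hint : IntervalIntegrable (fun t => Real.exp (-κ * (t - p))) volume p q := by
    apply Continuous.intervalIntegrable
    continuity
  rw [intervalIntegral.integral_eq_sub_of_hasDerivAt hderiv hint]
  simp only [sub_self, mul_zero, Real.exp_zero]
  field_simp
  ring

section Core
variable {f : ℝ → ℝ}

lemma core_lemma (hf_nonneg : ∀ x, 0 ≤ f x) (hf_int : Integrable f)
    (hf_logconc : ∀ x y : ℝ, ∀ a b : ℝ, 0 ≤ a → 0 ≤ b → a + b = 1 →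
      f x ^ a * f y ^ b ≤ f (a * x + b * y))
    {p q r : ℝ} (hpq : p < q) (hqr : q ≤ r)
    (h1 : f q < f p) (h2 : f r ≤ f q) :
    (f p - f q) * ((∫ t in Iic r, f t) - ∫ t in Iic q, f t) ≤
      (f q - f r) * ((∫ t in Iic q, f t) - ∫ t in Iic p, f t) := by
  have hFqp : (∫ t in Iic q, f t) - ∫ t in Iic p, f t = ∫ t in p..q, f t := by
    rw [intervalIntegral.integral_of_le hpq.le, F_diff hf_int hpq.le]; ring
  have hFrq : (∫ t in Iic r, f t) - ∫ t in Iic q, f t = ∫ t in q..r, f t := by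
    rw [intervalIntegral.integral_of_le hqr, F_diff hf_int hqr]; ring
  rw [hFqp, hFrq]
  rcases eq_or_lt_of_le (hf_nonneg q) with hq0 | hq0
  · -- f q = 0 : both sides vanish
    have hfr : f r = 0 := le_antisymm (hq0 ▸ h2) (hf_nonneg r)
    have hp0 : 0 < f p := lt_of_le_of_lt (le_of_eq hq0) h1
    have hzero : ∀ u ∈ Ioc q r, f u = 0 := by
      intro u hu
      have huq : q < u := hu.1
      have hupne : u - p ≠ 0 := sub_ne_zero.mpr (ne_of_gt (lt_trans hpq huq))
      have h := hf_logconc p u ((u - q)/(u - p)) ((q - p)/(u - p))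
        (div_nonneg (by linarith) (by linarith))
        (div_nonneg (by linarith) (by linarith)) (by field_simp; ring)
      have harg : (u - q)/(u - p) * p + (q - p)/(u - p) * u = q := by
        field_simp
        ring
      rw [harg, ← hq0] at h
      have hppos : 0 < f p ^ ((u - q)/(u - p)) := Real.rpow_pos_of_pos hp0 _
      rcases eq_or_lt_of_le (hf_nonneg u) with h' | h'
      · exact h'.symm
      · exfalso
        have : 0 < f u ^ ((q - p)/(u - p)) := Real.rpow_pos_of_pos h' _
        nlinarith
    have hzint : ∫ t in q..r, f t = 0 := by
      rw [intervalIntegral.integral_of_le hqr,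
        setIntegral_congr_fun measurableSet_Ioc (fun u hu => hzero u hu)]
      simp
    rw [hzint, ← hq0, hfr]
    have : 0 ≤ ∫ t in p..q, f t := by
      rw [← hFqp]; rw [F_diff hf_int hpq.le]
      have : 0 ≤ ∫ t in Ioc p q, f t :=
        setIntegral_nonneg measurableSet_Ioc (fun t _ => hf_nonneg t)
      linarith
    simp
  · -- main case
    have hp0 : 0 < f p := lt_trans hq0 h1
    set L : ℝ := Real.log (f p) - Real.log (f q) with hLdef
    have hL : 0 < L := by
      have := Real.log_lt_log hq0 h1
      simp only [hLdef]; linarith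
    set κ : ℝ := L / (q - p) with hκdef
    have hκ : 0 < κ := div_pos hL (by linarith)
    have hqpne : q - p ≠ 0 := sub_ne_zero.mpr (ne_of_gt hpq)
    have hfq_eq : f q = f p * Real.exp (-κ * (q - p)) := by
      have : -κ * (q - p) = -L := by rw [hκdef]; field_simp
      rw [this, hLdef, neg_sub, Real.exp_sub, Real.exp_log hq0, Real.exp_log hp0]
      field_simp
    -- lower bound on [p,q]
    have hlow : ∀ t ∈ Icc p q, f p * Real.exp (-κ * (t - p)) ≤ f t := by
      intro t ht
      set θ : ℝ := (t - p)/(q - p) with hθdef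
      have hθ0 : 0 ≤ θ := div_nonneg (by linarith [ht.1]) (by linarith)
      have hθ1 : θ ≤ 1 := by
        rw [hθdef, div_le_one (by linarith)]; linarith [ht.2]
      have h := hf_logconc p q (1 - θ) θ (by linarith) hθ0 (by ring)
      have harg : (1 - θ) * p + θ * q = t := by
        rw [hθdef]; field_simp; ring
      rw [harg] at h
      have hθL : κ * (t - p) = θ * Real.log (f p) - θ * Real.log (f q) := by
        rw [hκdef, hθdef, hLdef]; field_simp
      have hLHS : f p ^ (1 - θ) * f q ^ θ = f p * Real.exp (-κ * (t - p)) := by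
        have hRHS : f p * Real.exp (-κ * (t - p))
            = Real.exp (Real.log (f p) + -κ * (t - p)) := by
          rw [Real.exp_add, Real.exp_log hp0]
        rw [Real.rpow_def_of_pos hp0, Real.rpow_def_of_pos hq0, ← Real.exp_add, hRHS]
        congr 1
        linarith [hθL]
      linarith [hLHS ▸ h]
    -- upper bound on [q,r]
    have hhigh : ∀ u ∈ Icc q r, f u ≤ f q * Real.exp (-κ * (u - q)) := by
      intro u hu
      rcases eq_or_lt_of_le hu.1 with rfl | huq
      · simp
      set lam : ℝ := (u - q)/(u - p) with hlamdef
      have hup : 0 < u - p := by linarith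
      have hupne : u - p ≠ 0 := ne_of_gt hup
      have hlam0 : 0 < lam := div_pos (by linarith) hup
      have hlam1 : 0 < 1 - lam := by
        have : lam < 1 := by rw [hlamdef, div_lt_one hup]; linarith
        linarith
      have h := hf_logconc p u lam (1 - lam) hlam0.le hlam1.le (by ring)
      have harg : lam * p + (1 - lam) * u = q := by
        rw [hlamdef]; field_simp; ring
      rw [harg] at h
      rcases eq_or_lt_of_le (hf_nonneg u) with hu0 | hu0
      · rw [← hu0]
        positivity
      have hlog : lam * Real.log (f p) + (1 - lam) * Real.log (f u) ≤ Real.log (f q) := by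
        have hposprod : 0 < f p ^ lam * f u ^ (1 - lam) :=
          mul_pos (Real.rpow_pos_of_pos hp0 _) (Real.rpow_pos_of_pos hu0 _)
        have := Real.log_le_log hposprod h
        rwa [Real.log_mul (ne_of_gt (Real.rpow_pos_of_pos hp0 _))
            (ne_of_gt (Real.rpow_pos_of_pos hu0 _)),
          Real.log_rpow hp0, Real.log_rpow hu0] at this
      have hid : lam * L = (1 - lam) * (κ * (u - q)) := by
        rw [hlamdef, hκdef]; field_simp; ring
      have step : (1 - lam) * Real.log (f u) ≤ (1 - lam) * (Real.log (f q) - κ * (u - q)) := by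
        have hexp : lam * Real.log (f p) - lam * Real.log (f q)
            = κ * (u - q) - lam * (κ * (u - q)) := by
          have h' : lam * L = lam * Real.log (f p) - lam * Real.log (f q) := by
            rw [hLdef]; ring
          rw [← h', hid]; ring
        linarith [hlog, hexp]
      have hlogfin : Real.log (f u) ≤ Real.log (f q) - κ * (u - q) :=
        le_of_mul_le_mul_left (by linarith [step]) hlam1
      calc f u = Real.exp (Real.log (f u)) := (Real.exp_log hu0).symm
        _ ≤ Real.exp (Real.log (f q) - κ * (u - q)) := Real.exp_le_exp.mpr hlogfin
        _ = f q * Real.exp (-κ * (u - q)) := by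
            rw [sub_eq_add_neg, Real.exp_add, Real.exp_log hq0, neg_mul]
    -- integral bounds
    have hcont1 : Continuous (fun t : ℝ => Real.exp (-κ * (t - p))) :=
      Real.continuous_exp.comp (continuous_const.mul (continuous_id.sub continuous_const))
    have hcont2 : Continuous (fun t : ℝ => Real.exp (-κ * (t - q))) :=
      Real.continuous_exp.comp (continuous_const.mul (continuous_id.sub continuous_const))
    have hexpint : IntervalIntegrable (fun t => Real.exp (-κ * (t - p))) volume p q :=
      hcont1.intervalIntegrable p q
    have hexpint2 : IntervalIntegrable (fun u => Real.exp (-κ * (u - q))) volume q r :=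
      hcont2.intervalIntegrable q r
    have hFlow : (f p - f q) / κ ≤ ∫ t in p..q, f t := by
      have hmono := intervalIntegral.integral_mono_on hpq.le
        (hexpint.const_mul (f p)) hf_int.intervalIntegrable hlow
      rw [intervalIntegral.integral_const_mul, integral_exp_decay hκ] at hmono
      have : f p * ((1 - Real.exp (-κ * (q - p))) / κ) = (f p - f q) / κ := by
        rw [hfq_eq]; field_simp
      linarith [this ▸ hmono]
    have hFhigh : (∫ u in q..r, f u) ≤ (f q - f r) / κ := by
      have hmono := intervalIntegral.integral_mono_on hqr
        hf_int.intervalIntegrable (hexpint2.const_mul (f q)) hhigh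
      rw [intervalIntegral.integral_const_mul, integral_exp_decay hκ] at hmono
      have hr : f r ≤ f q * Real.exp (-κ * (r - q)) := hhigh r ⟨hqr, le_refl r⟩
      have h' : f q * ((1 - Real.exp (-κ * (r - q))) / κ)
          = (f q - f q * Real.exp (-κ * (r - q))) / κ := by ring
      have h'' : (f q - f q * Real.exp (-κ * (r - q))) / κ ≤ (f q - f r) / κ := by
        gcongr
        all_goals linarith [hr]
      linarith [h' ▸ hmono]
    calc (f p - f q) * ∫ u in q..r, f u ≤ (f p - f q) * ((f q - f r)/κ) := by
          apply mul_le_mul_of_nonneg_left hFhigh (by linarith)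
      _ = (f q - f r) * ((f p - f q)/κ) := by ring
      _ ≤ (f q - f r) * ∫ t in p..q, f t := by
          apply mul_le_mul_of_nonneg_left hFlow (by linarith)

end Core

section Triple
variable {f : ℝ → ℝ}

lemma integrable_neg' (hf_int : Integrable f) : Integrable (fun t => f (-t)) := by
  have h : Measure.map (fun t : ℝ => -t) (volume : Measure ℝ) = volume :=
    Measure.map_neg_eq_self volume
  exact Integrable.comp_measurable (by rw [h]; exact hf_int) measurable_neg

lemma Ioi_compl (hf_int : Integrable f) (a : ℝ) :
    (∫ t in Ioi a, f t) = (∫ t, f t) - ∫ t in Iic a, f t := by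
  have h := MeasureTheory.integral_add_compl (measurableSet_Iic (a := a)) hf_int
  rw [Set.compl_Iic] at h
  linarith

lemma mid_ge_min (hf_nonneg : ∀ x, 0 ≤ f x)
    (hf_logconc : ∀ x y : ℝ, ∀ a b : ℝ, 0 ≤ a → 0 ≤ b → a + b = 1 →
      f x ^ a * f y ^ b ≤ f (a * x + b * y))
    {c b a : ℝ} (hcb : c ≤ b) (hba : b ≤ a) :
    min (f c) (f a) ≤ f b := by
  rcases eq_or_lt_of_le (hcb.trans hba) with rfl | hca
  · have : b = c := le_antisymm hba hcb
    subst this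
    exact min_le_left _ _
  set m := min (f c) (f a) with hm
  rcases eq_or_lt_of_le (le_min (hf_nonneg c) (hf_nonneg a)) with hm0 | hm0
  · have : m = 0 := hm0.symm
    rw [this]; exact hf_nonneg b
  set θ : ℝ := (a - b)/(a - c) with hθdef
  have hac : 0 < a - c := by linarith
  have hθ0 : 0 ≤ θ := div_nonneg (by linarith) hac.le
  have hθ1 : 0 ≤ 1 - θ := by
    have : θ ≤ 1 := by rw [hθdef, div_le_one hac]; linarith
    linarith
  have h := hf_logconc c a θ (1 - θ) hθ0 hθ1 (by ring)
  have harg : θ * c + (1 - θ) * a = b := by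
    rw [hθdef]; field_simp; ring
  rw [harg] at h
  have h1 : m ^ θ * m ^ (1 - θ) ≤ f c ^ θ * f a ^ (1 - θ) :=
    mul_le_mul (Real.rpow_le_rpow hm0.le (min_le_left _ _) hθ0)
      (Real.rpow_le_rpow hm0.le (min_le_right _ _) hθ1)
      (Real.rpow_nonneg hm0.le _) (Real.rpow_nonneg (hf_nonneg c) _)
  have h2 : m ^ θ * m ^ (1 - θ) = m := by
    rw [← Real.rpow_add hm0]; norm_num; exact hm.symm
  linarith [h1.trans h]

lemma triple_lemma (hf_nonneg : ∀ x, 0 ≤ f x) (hf_int : Integrable f)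
    (hf_symm : ∀ x, f (-x) = f x)
    (hf_logconc : ∀ x y : ℝ, ∀ a b : ℝ, 0 ≤ a → 0 ≤ b → a + b = 1 →
      f x ^ a * f y ^ b ≤ f (a * x + b * y))
    {c b a : ℝ} (hcb : c ≤ b) (hba : b ≤ a) :
    f a * ((∫ t in Iic b, f t) - ∫ t in Iic c, f t)
      + f c * ((∫ t in Iic a, f t) - ∫ t in Iic b, f t)
      ≤ f b * ((∫ t in Iic a, f t) - ∫ t in Iic c, f t) := by
  have hFcb : (∫ t in Iic c, f t) ≤ ∫ t in Iic b, f t := by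
    rw [F_diff hf_int hcb]
    have h0 : 0 ≤ ∫ t in Ioc c b, f t :=
      setIntegral_nonneg measurableSet_Ioc (fun t _ => hf_nonneg t)
    linarith
  have hFba : (∫ t in Iic b, f t) ≤ ∫ t in Iic a, f t := by
    rw [F_diff hf_int hba]
    have h0 : 0 ≤ ∫ t in Ioc b a, f t :=
      setIntegral_nonneg measurableSet_Ioc (fun t _ => hf_nonneg t)
    linarith
  by_cases hfa : f a ≤ f b
  · by_cases hfc : f c ≤ f b
    · nlinarith [mul_le_mul_of_nonneg_right hfa (by linarith : (0:ℝ) ≤ (∫ t in Iic b, f t) - ∫ t in Iic c, f t),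
        mul_le_mul_of_nonneg_right hfc (by linarith : (0:ℝ) ≤ (∫ t in Iic a, f t) - ∫ t in Iic b, f t)]
    · -- f b < f c, so f a ≤ f b ; direct core with p=c,q=b,r=a
      push_neg at hfc
      have hcbstrict : c < b := by
        rcases eq_or_lt_of_le hcb with rfl | h
        · exact absurd hfc (lt_irrefl _)
        · exact h
      have h := core_lemma hf_nonneg hf_int hf_logconc hcbstrict hba hfc hfa
      nlinarith [h]
  · -- f b < f a ⇒ f c ≤ f b ; reflected core
    push_neg at hfa
    have hfc : f c ≤ f b := by
      have hmin := mid_ge_min hf_nonneg hf_logconc hcb hba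
      rcases min_cases (f c) (f a) with ⟨heq, _⟩ | ⟨heq, _⟩
      · rwa [heq] at hmin
      · rw [heq] at hmin; linarith
    have hbastrict : b < a := by
      rcases eq_or_lt_of_le hba with rfl | h
      · exact absurd hfa (lt_irrefl _)
      · exact h
    -- reflected function
    set g : ℝ → ℝ := fun t => f (-t) with hg
    have hg_nonneg : ∀ x, 0 ≤ g x := fun x => hf_nonneg (-x)
    have hg_int : Integrable g := integrable_neg' hf_int
    have hg_logconc : ∀ x y : ℝ, ∀ s t : ℝ, 0 ≤ s → 0 ≤ t → s + t = 1 →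
        g x ^ s * g y ^ t ≤ g (s * x + t * y) := by
      intro x y s t hs ht hst
      have := hf_logconc (-x) (-y) s t hs ht hst
      have harg : s * -x + t * -y = -(s * x + t * y) := by ring
      rw [harg] at this
      simpa [hg] using this
    have hcore := core_lemma hg_nonneg hg_int hg_logconc
      (show -a < -b by linarith) (show -b ≤ -c by linarith)
      (by simpa [hg, hf_symm] using hfa) (by simpa [hg, hf_symm] using hfc)
    -- rewrite the g-integrals
    have hGrel : ∀ s : ℝ, (∫ t in Iic (-s), g t) = (∫ t, f t) - ∫ t in Iic s, f t := by
      intro s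
      have h1 : (∫ t in Iic (-s), g t) = ∫ t in Ioi s, f t := by
        rw [hg]
        have := integral_comp_neg_Iic (-s) f
        rwa [neg_neg] at this
      rw [h1, Ioi_compl hf_int]
    rw [hGrel c, hGrel b, hGrel a] at hcore
    have hga : g (-a) = f a := by rw [hg]; simp
    have hgb : g (-b) = f b := by rw [hg]; simp
    have hgc : g (-c) = f c := by rw [hg]; simp
    rw [hga, hgb, hgc] at hcore
    nlinarith [hcore]

end Triple

section Edge
variable {f : ℝ → ℝ} {η : ℝ → ℝ}

lemma reflect_logconc
    (hf_logconc : ∀ x y : ℝ, ∀ a b : ℝ, 0 ≤ a → 0 ≤ b → a + b = 1 →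
      f x ^ a * f y ^ b ≤ f (a * x + b * y)) :
    ∀ x y : ℝ, ∀ s t : ℝ, 0 ≤ s → 0 ≤ t → s + t = 1 →
      (fun u => f (-u)) x ^ s * (fun u => f (-u)) y ^ t ≤ (fun u => f (-u)) (s * x + t * y) := by
  intro x y s t hs ht hst
  have h := hf_logconc (-x) (-y) s t hs ht hst
  have harg : s * -x + t * -y = -(s * x + t * y) := by ring
  rw [harg] at h
  simpa using h

lemma G_val (hf_int : Integrable f) (hf_mass : ∫ x, f x = 1) (s : ℝ) :
    (∫ t in Iic (-s), f (-t)) = 1 - ∫ t in Iic s, f t := by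
  have h1 : (∫ t in Iic (-s), (fun u => f (-u)) t) = ∫ t in Ioi s, f t := by
    have := integral_comp_neg_Iic (-s) f
    rwa [neg_neg] at this
  rw [h1, Ioi_compl hf_int, hf_mass]

lemma ratio_hazard (hf_nonneg : ∀ x, 0 ≤ f x) (hf_int : Integrable f)
    (hf_mass : ∫ x, f x = 1)
    (hf_logconc : ∀ x y : ℝ, ∀ a b : ℝ, 0 ≤ a → 0 ≤ b → a + b = 1 →
      f x ^ a * f y ^ b ≤ f (a * x + b * y))
    {c b : ℝ} (hcb : c ≤ b) :
    f c * (1 - ∫ t in Iic b, f t) ≤ f b * (1 - ∫ t in Iic c, f t) := by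
  have h := ratio_fF (f := fun u => f (-u)) (fun x => hf_nonneg (-x)) (integrable_neg' hf_int)
    (reflect_logconc hf_logconc) (show -b ≤ -c by linarith)
  rw [G_val hf_int hf_mass b, G_val hf_int hf_mass c] at h
  simpa using h

lemma edge_left (hf_nonneg : ∀ x, 0 ≤ f x) (hf_int : Integrable f)
    (hf_mass : ∫ x, f x = 1)
    (hf_logconc : ∀ x y : ℝ, ∀ a b : ℝ, 0 ≤ a → 0 ≤ b → a + b = 1 →
      f x ^ a * f y ^ b ≤ f (a * x + b * y))
    (hη : ∀ x, η x = f x ^ 2 / ((∫ t in Iic x, f t) * (1 - ∫ t in Iic x, f t)))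
    (hη_mono : ∀ a b : ℝ, |a| ≤ |b| → η b ≤ η a)
    {a : ℝ} (ha : (∫ t in Iic a, f t) = 0) : f a = 0 := by
  by_contra hfa0
  have hfa : 0 < f a := lt_of_le_of_ne (hf_nonneg a) (Ne.symm hfa0)
  -- find b > a with f b > 0
  obtain ⟨b, hab, hfb⟩ : ∃ b, a < b ∧ 0 < f b := by
    by_contra hcon
    push_neg at hcon
    have hzero : ∀ w ∈ Ioi a, f w = 0 := fun w hw =>
      le_antisymm (hcon w hw) (hf_nonneg w)
    have h0 : (∫ t in Ioi a, f t) = 0 := by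
      rw [setIntegral_congr_fun measurableSet_Ioi hzero]
      simp
    rw [Ioi_compl hf_int, hf_mass, ha] at h0
    linarith
  set c : ℝ := min (f a) (f b) with hc
  have hcpos : 0 < c := lt_min hfa hfb
  have hmin : ∀ t ∈ Icc a b, c ≤ f t := by
    intro t ht
    exact le_trans (le_refl c) (mid_ge_min hf_nonneg hf_logconc ht.1 ht.2)
  set E : ℝ := η 0 with hE
  have hEa : η a ≤ E := hη_mono 0 a (by simp [abs_nonneg])
  have hE0 : 0 ≤ E := by
    refine le_trans ?_ hEa
    rw [hη a]
    apply div_nonneg (sq_nonneg _)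
    apply mul_nonneg (F_nonneg hf_nonneg a)
    have := F_le_one hf_nonneg hf_int hf_mass a
    linarith
  set δ : ℝ := c^2/(E+1) with hδ
  have hδpos : 0 < δ := div_pos (pow_pos hcpos 2) (by linarith)
  -- find t ∈ (a,b) with small mass
  have hanti : Antitone (fun k : ℕ => Ioc a (a + (b - a)/(k+1))) := by
    intro k l hkl
    apply Set.Ioc_subset_Ioc le_rfl
    have h1 : (0:ℝ) < k + 1 := by positivity
    have h2 : (0:ℝ) < l + 1 := by positivity
    have : (b - a)/(l+1) ≤ (b - a)/(k+1) := by
      apply div_le_div_of_nonneg_left (by linarith) h1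
      linarith [(Nat.cast_le (α := ℝ)).mpr hkl]
    linarith
  have hiInter : (⋂ k : ℕ, Ioc a (a + (b - a)/(k+1))) = ∅ := by
    ext t
    simp only [Set.mem_iInter, Set.mem_empty_iff_false, iff_false]
    intro hcon
    have hta : a < t := (hcon 0).1
    obtain ⟨k, hk⟩ := exists_nat_gt ((b - a)/(t - a))
    have h1 : t ≤ a + (b - a)/(k+1) := (hcon k).2
    have h2 : (b - a)/(k+1) < t - a := by
      rw [div_lt_iff₀ (by positivity)]
      have h3 : (b - a)/(t - a) < k + 1 := by
        calc (b-a)/(t-a) < (k:ℝ) := hk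
          _ < k + 1 := by linarith
      have htane : t - a ≠ 0 := ne_of_gt (by linarith)
      calc b - a = ((b-a)/(t-a)) * (t - a) := by field_simp
        _ < (k+1) * (t-a) := by
            apply mul_lt_mul_of_pos_right h3 (by linarith)
        _ = (t - a) * (k+1) := by ring
    linarith
  have htend := tendsto_setIntegral_of_antitone (μ := volume) (f := f)
    (fun k : ℕ => measurableSet_Ioc) hanti ⟨0, hf_int.integrableOn⟩
  rw [hiInter] at htend
  simp only [Measure.restrict_empty, integral_zero_measure] at htend
  have hev := (htend.eventually (gt_mem_nhds hδpos)).and (Filter.eventually_ge_atTop 1)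
  obtain ⟨k, hk1, hk2⟩ := hev.exists
  set t : ℝ := a + (b - a)/(k+1) with htdef
  have hat : a < t := by
    rw [htdef]
    have : (0:ℝ) < (b - a)/(k+1) := div_pos (by linarith) (by positivity)
    linarith
  have htb : t < b := by
    rw [htdef]
    have hk1' : (1:ℝ) ≤ k := by exact_mod_cast hk2
    have h2 : (b - a)/(k+1) ≤ (b-a)/2 := by
      apply div_le_div_of_nonneg_left (by linarith) (by norm_num)
      linarith
    linarith
  have hFt : (∫ u in Iic t, f u) = ∫ u in Ioc a t, f u := by
    rw [F_diff hf_int hat.le, ha, zero_add]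
  have hFtsmall : (∫ u in Iic t, f u) < δ := by rw [hFt]; exact hk1
  have hFtpos : 0 < ∫ u in Iic t, f u := by
    rw [hFt]
    have hlow : (∫ u in Ioc a t, (fun _ => c) u) ≤ ∫ u in Ioc a t, f u := by
      apply setIntegral_mono_on (integrableOn_const ?_)
        hf_int.integrableOn measurableSet_Ioc
      · intro u hu
        exact hmin u ⟨hu.1.le, hu.2.trans htb.le⟩
      · rw [Real.volume_Ioc]
        exact ENNReal.ofReal_ne_top
    rw [setIntegral_const, Real.volume_real_Ioc, smul_eq_mul,
      max_eq_left (by linarith)] at hlow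
    nlinarith [hlow]
  have hFtlt1 : (∫ u in Iic t, f u) < 1 := by
    have h1 : (∫ u in Ioi t, f u) = 1 - ∫ u in Iic t, f u := by
      rw [Ioi_compl hf_int, hf_mass]
    have hlow : (∫ u in Ioc t b, (fun _ => c) u) ≤ ∫ u in Ioc t b, f u := by
      apply setIntegral_mono_on (integrableOn_const ?_)
        hf_int.integrableOn measurableSet_Ioc
      · intro u hu
        exact hmin u ⟨(hat.trans hu.1).le, hu.2⟩
      · rw [Real.volume_Ioc]
        exact ENNReal.ofReal_ne_top
    rw [setIntegral_const, Real.volume_real_Ioc, smul_eq_mul,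
      max_eq_left (by linarith)] at hlow
    have hsub : (∫ u in Ioc t b, f u) ≤ ∫ u in Ioi t, f u := by
      apply setIntegral_mono_set hf_int.integrableOn
        (Filter.Eventually.of_forall fun u => hf_nonneg u)
      exact HasSubset.Subset.eventuallyLE Ioc_subset_Ioi_self
    nlinarith [hlow, hsub]
  -- now the contradiction
  set Ft : ℝ := ∫ u in Iic t, f u with hFtdef
  have hft : c ≤ f t := hmin t ⟨hat.le, htb.le⟩
  have hηt : c^2 / Ft ≤ η t := by
    rw [hη t, ← hFtdef]
    have hd1 : 0 < Ft * (1 - Ft) := mul_pos hFtpos (by linarith)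
    calc c^2/Ft ≤ c^2/(Ft * (1 - Ft)) := by
          apply div_le_div_of_nonneg_left (sq_nonneg c) hd1
          nlinarith
      _ ≤ f t^2/(Ft * (1 - Ft)) := by
          gcongr
          all_goals exact pow_le_pow_left₀ hcpos.le hft 2
  have hlast : E < c^2 / Ft := by
    have h1 : c^2/δ = E + 1 := by rw [hδ]; field_simp
    have h2 : c^2/δ < c^2/Ft := div_lt_div_of_pos_left (pow_pos hcpos 2) hFtpos hFtsmall
    linarith
  have hmono := hη_mono 0 t (by simp [abs_nonneg])
  linarith [hηt, hmono]

lemma edge_right (hf_nonneg : ∀ x, 0 ≤ f x) (hf_int : Integrable f)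
    (hf_mass : ∫ x, f x = 1) (hf_symm : ∀ x, f (-x) = f x)
    (hf_logconc : ∀ x y : ℝ, ∀ a b : ℝ, 0 ≤ a → 0 ≤ b → a + b = 1 →
      f x ^ a * f y ^ b ≤ f (a * x + b * y))
    (hη : ∀ x, η x = f x ^ 2 / ((∫ t in Iic x, f t) * (1 - ∫ t in Iic x, f t)))
    (hη_mono : ∀ a b : ℝ, |a| ≤ |b| → η b ≤ η a)
    {a : ℝ} (ha : (∫ t in Iic a, f t) = 1) : f a = 0 := by
  have hFneg : (∫ t in Iic (-a), f t) = 0 := by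
    rw [F_neg hf_int hf_mass hf_symm a, ha]; ring
  have h := edge_left hf_nonneg hf_int hf_mass hf_logconc hη hη_mono hFneg
  rw [hf_symm a] at h
  exact h

lemma tie_lemma (hf_nonneg : ∀ x, 0 ≤ f x) (hf_int : Integrable f)
    (hf_mass : ∫ x, f x = 1) (hf_symm : ∀ x, f (-x) = f x)
    (hf_logconc : ∀ x y : ℝ, ∀ a b : ℝ, 0 ≤ a → 0 ≤ b → a + b = 1 →
      f x ^ a * f y ^ b ≤ f (a * x + b * y))
    (hη : ∀ x, η x = f x ^ 2 / ((∫ t in Iic x, f t) * (1 - ∫ t in Iic x, f t)))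
    (hη_mono : ∀ a b : ℝ, |a| ≤ |b| → η b ≤ η a)
    {a b : ℝ} (hab : a ≤ b)
    (hFeq : (∫ t in Iic a, f t) = ∫ t in Iic b, f t) : f a = f b := by
  rcases eq_or_lt_of_le (F_nonneg hf_nonneg a) with hFa0 | hFa0
  · rw [edge_left hf_nonneg hf_int hf_mass hf_logconc hη hη_mono hFa0.symm,
      edge_left hf_nonneg hf_int hf_mass hf_logconc hη hη_mono (hFeq ▸ hFa0.symm)]
  rcases eq_or_lt_of_le (F_le_one hf_nonneg hf_int hf_mass b) with hFb1 | hFb1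
  · rw [edge_right hf_nonneg hf_int hf_mass hf_symm hf_logconc hη hη_mono hFb1,
      edge_right hf_nonneg hf_int hf_mass hf_symm hf_logconc hη hη_mono (hFeq.trans hFb1)]
  have h1 := ratio_fF hf_nonneg hf_int hf_logconc hab
  have h2 := ratio_hazard hf_nonneg hf_int hf_mass hf_logconc hab
  rw [hFeq] at h1
  rw [← hFeq] at h2
  have hFb0 : 0 < ∫ t in Iic b, f t := hFeq ▸ hFa0
  have hFa1 : (∫ t in Iic a, f t) < 1 := hFeq ▸ hFb1
  have hle : f b ≤ f a := by
    by_contra hcon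
    push_neg at hcon
    nlinarith [h1]
  have hge : f a ≤ f b := by
    by_contra hcon
    push_neg at hcon
    nlinarith [h2]
  linarith

end Edge


section Phi

def MajSet (P : Set (ℝ × ℝ)) : Set (ℝ × ℝ) := {p | ∀ q ∈ P, q.2 ≤ p.1 * q.1 + p.2}

noncomputable def phi (P : Set (ℝ × ℝ)) (s : ℝ) : ℝ :=
  sInf ((fun p : ℝ × ℝ => p.1 * s + p.2) '' MajSet P)

variable {P : Set (ℝ × ℝ)}

lemma maj_lb (hP0 : ((0:ℝ),(0:ℝ)) ∈ P) (hP1 : ((1:ℝ),(0:ℝ)) ∈ P)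
    {p : ℝ × ℝ} (hp : p ∈ MajSet P) {u : ℝ} (hu0 : 0 ≤ u) (hu1 : u ≤ 1) :
    0 ≤ p.1 * u + p.2 := by
  have h0 := hp _ hP0
  have h1 := hp _ hP1
  simp only at h0 h1
  nlinarith

lemma phi_bddBelow (hP0 : ((0:ℝ),(0:ℝ)) ∈ P) (hP1 : ((1:ℝ),(0:ℝ)) ∈ P)
    {u : ℝ} (hu0 : 0 ≤ u) (hu1 : u ≤ 1) :
    BddBelow ((fun p : ℝ × ℝ => p.1 * u + p.2) '' MajSet P) := by
  refine ⟨0, ?_⟩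
  rintro y ⟨p, hp, rfl⟩
  exact maj_lb hP0 hP1 hp hu0 hu1

lemma phi_nonneg (hP0 : ((0:ℝ),(0:ℝ)) ∈ P) (hP1 : ((1:ℝ),(0:ℝ)) ∈ P)
    (hMajne : (MajSet P).Nonempty) {u : ℝ} (hu0 : 0 ≤ u) (hu1 : u ≤ 1) :
    0 ≤ phi P u :=
  le_csInf (hMajne.image _) (by rintro y ⟨p, hp, rfl⟩; exact maj_lb hP0 hP1 hp hu0 hu1)

lemma phi_le_of_maj (hP0 : ((0:ℝ),(0:ℝ)) ∈ P) (hP1 : ((1:ℝ),(0:ℝ)) ∈ P)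
    {p : ℝ × ℝ} (hp : p ∈ MajSet P) {u : ℝ} (hu0 : 0 ≤ u) (hu1 : u ≤ 1) :
    phi P u ≤ p.1 * u + p.2 :=
  csInf_le (phi_bddBelow hP0 hP1 hu0 hu1) ⟨p, hp, rfl⟩

lemma phi_ge_node (hMajne : (MajSet P).Nonempty) {q : ℝ × ℝ} (hq : q ∈ P) :
    q.2 ≤ phi P q.1 :=
  le_csInf (hMajne.image _) (by rintro y ⟨p, hp, rfl⟩; exact hp q hq)

lemma phi_fourpoint (hP0 : ((0:ℝ),(0:ℝ)) ∈ P) (hP1 : ((1:ℝ),(0:ℝ)) ∈ P)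
    (hMajne : (MajSet P).Nonempty)
    {lo hi p : ℝ} (hlo : 0 ≤ lo) (hhi : hi ≤ 1) (h1 : lo ≤ p) (h2 : p ≤ hi) :
    phi P lo + phi P hi ≤ phi P p + phi P (lo + hi - p) := by
  have hlh : lo ≤ hi := h1.trans h2
  rcases eq_or_lt_of_le hlh with heq | hlh'
  · have hp : p = lo := le_antisymm (heq ▸ h2) h1
    rw [hp]
    have hq : lo + hi - lo = hi := by ring
    rw [hq]
  set α : ℝ := (hi - p)/(hi - lo) with hα
  have hd : 0 < hi - lo := by linarith
  have hα0 : 0 ≤ α := div_nonneg (by linarith) hd.le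
  have hα1 : α ≤ 1 := by rw [hα, div_le_one hd]; linarith
  have key : ∀ l1 ∈ MajSet P, ∀ l2 ∈ MajSet P,
      phi P lo + phi P hi ≤ (l1.1 * p + l1.2) + (l2.1 * (lo + hi - p) + l2.2) := by
    intro l1 hl1 l2 hl2
    have e1 : l1.1 * p + l1.2 = α * (l1.1 * lo + l1.2) + (1 - α) * (l1.1 * hi + l1.2) := by
      have hp' : p = α * lo + (1 - α) * hi := by
        rw [hα]; field_simp; ring
      rw [hp']; ring
    have e2 : l2.1 * (lo + hi - p) + l2.2
        = (1 - α) * (l2.1 * lo + l2.2) + α * (l2.1 * hi + l2.2) := by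
      have hp' : lo + hi - p = (1 - α) * lo + α * hi := by
        rw [hα]; field_simp; ring
      rw [hp']; ring
    have b1 : phi P lo ≤ l1.1 * lo + l1.2 := phi_le_of_maj hP0 hP1 hl1 hlo (by linarith)
    have b2 : phi P hi ≤ l1.1 * hi + l1.2 := phi_le_of_maj hP0 hP1 hl1 (by linarith) hhi
    have b3 : phi P lo ≤ l2.1 * lo + l2.2 := phi_le_of_maj hP0 hP1 hl2 hlo (by linarith)
    have b4 : phi P hi ≤ l2.1 * hi + l2.2 := phi_le_of_maj hP0 hP1 hl2 (by linarith) hhi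
    rw [e1, e2]
    nlinarith [mul_le_mul_of_nonneg_left b1 hα0, mul_le_mul_of_nonneg_left b2 (by linarith : (0:ℝ) ≤ 1 - α),
      mul_le_mul_of_nonneg_left b3 (by linarith : (0:ℝ) ≤ 1 - α), mul_le_mul_of_nonneg_left b4 hα0]
  have h4 : phi P lo + phi P hi - phi P p ≤ phi P (lo + hi - p) := by
    apply le_csInf (hMajne.image _)
    rintro y ⟨l2, hl2, rfl⟩
    dsimp only
    have h5 : phi P lo + phi P hi - (l2.1 * (lo + hi - p) + l2.2) ≤ phi P p := by
      apply le_csInf (hMajne.image _)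
      rintro y' ⟨l1, hl1, rfl⟩
      dsimp only
      linarith [key l1 hl1 l2 hl2]
    linarith
  linarith

lemma phi_le_tangent (hP0 : ((0:ℝ),(0:ℝ)) ∈ P) (hP1 : ((1:ℝ),(0:ℝ)) ∈ P)
    {M : ℝ} (hM : 0 ≤ M)
    (hbox : ∀ q ∈ P, 0 ≤ q.1 ∧ q.1 ≤ 1 ∧ 0 ≤ q.2)
    (hval : ∀ q ∈ P, q.2 ^ 2 ≤ M * (q.1 * (1 - q.1)))
    {S : ℝ} (hS0 : 0 < S) (hS1 : S < 1) :
    phi P S ≤ Real.sqrt M * Real.sqrt (S * (1 - S)) := by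
  set h : ℝ := Real.sqrt (S * (1 - S)) with hh
  have hSS : 0 < S * (1 - S) := mul_pos hS0 (by linarith)
  have hhpos : 0 < h := Real.sqrt_pos.mpr hSS
  have hh2 : h ^ 2 = S * (1 - S) := Real.sq_sqrt hSS.le
  set α : ℝ := Real.sqrt M * (1 - 2*S) / (2*h) with hαdef
  set β : ℝ := Real.sqrt M * h - α * S with hβdef
  have hmem : (α, β) ∈ MajSet P := by
    intro q hq
    obtain ⟨hq0, hq1, hq2⟩ := hbox q hq
    have hqv := hval q hq
    set u : ℝ := q.1 with hu
    -- q.2 ≤ √M √(u(1-u))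
    have step1 : q.2 ≤ Real.sqrt M * Real.sqrt (u * (1 - u)) := by
      have h1 : q.2 = Real.sqrt (q.2 ^ 2) := (Real.sqrt_sq hq2).symm
      rw [h1, ← Real.sqrt_mul hM]
      exact Real.sqrt_le_sqrt hqv
    -- √(u(1-u)) ≤ h + (1-2S)(u-S)/(2h)  (pure part)
    have key : 2*h*Real.sqrt (u * (1 - u)) ≤ 2*h^2 + (1 - 2*S)*(u - S) := by
      have e1 : h * Real.sqrt (u * (1 - u)) = Real.sqrt (S*(1-u)) * Real.sqrt (u*(1-S)) := by
        rw [hh, ← Real.sqrt_mul hSS.le, ← Real.sqrt_mul (by nlinarith : (0:ℝ) ≤ S*(1-u))]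
        congr 1
        ring
      have e2 : Real.sqrt (S*(1-u)) ^ 2 = S*(1-u) := Real.sq_sqrt (by nlinarith)
      have e3 : Real.sqrt (u*(1-S)) ^ 2 = u*(1-S) := Real.sq_sqrt (by nlinarith)
      nlinarith [sq_nonneg (Real.sqrt (S*(1-u)) - Real.sqrt (u*(1-S))), e1, e2, e3]
    have hne : h ≠ 0 := ne_of_gt hhpos
    have step2 : Real.sqrt (u * (1 - u)) ≤ h + (1 - 2*S)*(u - S)/(2*h) := by
      have e : h + (1 - 2*S)*(u - S)/(2*h) = (2*h^2 + (1-2*S)*(u-S))/(2*h) := by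
        field_simp
      rw [e, le_div_iff₀ (by linarith : (0:ℝ) < 2*h)]
      nlinarith [key]
    -- combine
    have := mul_le_mul_of_nonneg_left step2 (Real.sqrt_nonneg M)
    have hα' : Real.sqrt M * (1 - 2*S) * (u - S)/(2*h) = α * (u - S) := by
      rw [hαdef]; ring
    have hαu : α * u + β = Real.sqrt M * (h + (1 - 2*S)*(u - S)/(2*h)) := by
      calc α * u + β = Real.sqrt M * h + α * (u - S) := by rw [hβdef]; ring
        _ = Real.sqrt M * h + Real.sqrt M * (1 - 2*S) * (u - S)/(2*h) := by rw [hα']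
        _ = Real.sqrt M * (h + (1 - 2*S)*(u - S)/(2*h)) := by ring
    calc q.2 ≤ Real.sqrt M * Real.sqrt (u * (1 - u)) := step1
      _ ≤ Real.sqrt M * (h + (1 - 2*S)*(u - S)/(2*h)) := this
      _ = α * u + β := hαu.symm
  have := phi_le_of_maj hP0 hP1 hmem hS0.le hS1.le
  simp only at this
  calc phi P S ≤ α * S + β := this
    _ = Real.sqrt M * h := by rw [hβdef]; ring

end Phi

section PhiNode

lemma phi_le_node {N : Finset (ℝ × ℝ)}
    (hP0 : ((0:ℝ),(0:ℝ)) ∈ N) (hP1 : ((1:ℝ),(0:ℝ)) ∈ N)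
    (hbox : ∀ q ∈ N, 0 ≤ q.1 ∧ q.1 ≤ 1 ∧ 0 ≤ q.2)
    (htie : ∀ q ∈ N, ∀ q' ∈ N, q.1 = q'.1 → q.2 = q'.2)
    (htri : ∀ q ∈ N, ∀ q' ∈ N, ∀ q'' ∈ N, q.1 < q'.1 → q'.1 < q''.1 →
      q.2 * (q''.1 - q'.1) + q''.2 * (q'.1 - q.1) ≤ q'.2 * (q''.1 - q.1))
    {q : ℝ × ℝ} (hq : q ∈ N) :
    phi (↑N) q.1 ≤ q.2 := by
  have hP0' : ((0:ℝ),(0:ℝ)) ∈ (↑N : Set (ℝ × ℝ)) := by exact_mod_cast hP0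
  have hP1' : ((1:ℝ),(0:ℝ)) ∈ (↑N : Set (ℝ × ℝ)) := by exact_mod_cast hP1
  obtain ⟨hq01, hq11, hq21⟩ := hbox q hq
  by_cases hq1 : q.1 = 1
  · -- rightmost node
    have hq20 : q.2 = 0 := htie q hq ((1:ℝ),(0:ℝ)) hP1 (by rw [hq1])
    set L := N.filter (fun q' => q'.1 < 1) with hLdef
    have hLne : L.Nonempty := ⟨((0:ℝ),(0:ℝ)), Finset.mem_filter.mpr ⟨hP0, by norm_num⟩⟩
    set α : ℝ := min (L.inf' hLne (fun q' => q'.2/(q'.1 - 1))) 0 with hαdef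
    have hmem : ((α, -α) : ℝ × ℝ) ∈ MajSet (↑N : Set (ℝ × ℝ)) := by
      intro q' hq'
      have hq'N : q' ∈ N := hq'
      obtain ⟨hb1, hb2, hb3⟩ := hbox q' hq'N
      rcases eq_or_lt_of_le hb2 with heq | hlt
      · have : q'.2 = 0 := htie q' hq'N ((1:ℝ),(0:ℝ)) hP1 (by rw [heq])
        simp only [this, heq]
        linarith
      · have hq'L : q' ∈ L := Finset.mem_filter.mpr ⟨hq'N, hlt⟩
        have hα : α ≤ q'.2/(q'.1 - 1) :=
          le_trans (min_le_left _ _) (Finset.inf'_le _ hq'L)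
        have hneg : q'.1 - 1 ≤ 0 := by linarith
        have := mul_le_mul_of_nonpos_right hα hneg
        rw [div_mul_cancel₀ _ (by linarith : q'.1 - 1 ≠ 0)] at this
        simp only
        linarith
    have hphi := phi_le_of_maj hP0' hP1' hmem hq01 hq11
    simp only at hphi
    rw [hq1] at hphi ⊢
    rw [hq20]
    linarith
  · have hq1' : q.1 < 1 := lt_of_le_of_ne hq11 hq1
    set R := N.filter (fun q' => q.1 < q'.1) with hRdef
    have hRne : R.Nonempty := ⟨((1:ℝ),(0:ℝ)), Finset.mem_filter.mpr ⟨hP1, hq1'⟩⟩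
    set α : ℝ := R.sup' hRne (fun q' => (q'.2 - q.2)/(q'.1 - q.1)) with hαdef
    have hmem : ((α, q.2 - α * q.1) : ℝ × ℝ) ∈ MajSet (↑N : Set (ℝ × ℝ)) := by
      intro q' hq'
      have hq'N : q' ∈ N := hq'
      obtain ⟨hb1, hb2, hb3⟩ := hbox q' hq'N
      simp only
      rcases lt_trichotomy q'.1 q.1 with hlt | heq | hgt
      · -- left node
        have hLs : α ≤ (q.2 - q'.2)/(q.1 - q'.1) := by
          apply Finset.sup'_le
          intro r hr
          have hrN : r ∈ N := (Finset.mem_filter.mp hr).1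
          have hrgt : q.1 < r.1 := (Finset.mem_filter.mp hr).2
          have htr := htri q' hq'N q hq r hrN hlt hrgt
          rw [div_le_div_iff₀ (by linarith) (by linarith)]
          nlinarith [htr]
        have hneg : q'.1 - q.1 ≤ 0 := by linarith
        have hmul := mul_le_mul_of_nonpos_right hLs hneg
        have hcan : (q.2 - q'.2)/(q.1 - q'.1) * (q'.1 - q.1) = -(q.2 - q'.2) := by
          rw [show q'.1 - q.1 = -(q.1 - q'.1) by ring, mul_neg,
            div_mul_cancel₀ _ (by linarith : q.1 - q'.1 ≠ 0)]
        rw [hcan] at hmul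
        linarith
      · have : q'.2 = q.2 := htie q' hq'N q hq heq
        rw [this, heq]
        ring_nf
        linarith
      · have hq'R : q' ∈ R := Finset.mem_filter.mpr ⟨hq'N, hgt⟩
        have hα : (q'.2 - q.2)/(q'.1 - q.1) ≤ α := by
          rw [hαdef]
          exact Finset.le_sup' (fun r : ℝ × ℝ => (r.2 - q.2)/(r.1 - q.1)) hq'R
        have hpos : (0:ℝ) < q'.1 - q.1 := by linarith
        have hmul := mul_le_mul_of_nonneg_right hα hpos.le
        rw [div_mul_cancel₀ _ (ne_of_gt hpos)] at hmul
        linarith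
    have hphi := phi_le_of_maj hP0' hP1' hmem hq01 hq11
    simp only at hphi
    linarith

end PhiNode

section Master

lemma sum_pairs (v : ℕ → ℝ) (m : ℕ) :
    ∑ i ∈ Finset.range (2*m), (-1:ℝ)^i * v i
      = ∑ j ∈ Finset.range m, (v (2*j) - v (2*j+1)) := by
  induction m with
  | zero => simp
  | succ m ih =>
    rw [show 2*(m+1) = 2*m+1+1 by ring, Finset.sum_range_succ, Finset.sum_range_succ,
      Finset.sum_range_succ, ih]
    have h1 : (-1:ℝ)^(2*m) = 1 := by
      rw [pow_mul]; norm_num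
    have h2 : (-1:ℝ)^(2*m+1) = -1 := by
      rw [pow_succ, h1]; norm_num
    rw [h1, h2]; ring

lemma master {N : Finset (ℝ × ℝ)}
    (hP0 : ((0:ℝ),(0:ℝ)) ∈ N) (hP1 : ((1:ℝ),(0:ℝ)) ∈ N)
    (hbox : ∀ q ∈ N, 0 ≤ q.1 ∧ q.1 ≤ 1 ∧ 0 ≤ q.2)
    (htie : ∀ q ∈ N, ∀ q' ∈ N, q.1 = q'.1 → q.2 = q'.2)
    (htri : ∀ q ∈ N, ∀ q' ∈ N, ∀ q'' ∈ N, q.1 < q'.1 → q'.1 < q''.1 →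
      q.2 * (q''.1 - q'.1) + q''.2 * (q'.1 - q.1) ≤ q'.2 * (q''.1 - q.1))
    (hMajne : (MajSet (↑N : Set (ℝ × ℝ))).Nonempty)
    {M : ℝ} (hM : 0 ≤ M)
    (hval : ∀ q ∈ N, q.2 ^ 2 ≤ M * (q.1 * (1 - q.1)))
    (m : ℕ) (s g : ℕ → ℝ)
    (hnode : ∀ k, ((s k, g k) : ℝ × ℝ) ∈ N)
    (hmono : ∀ k l, k ≤ l → s l ≤ s k)
    (hS0 : 0 < ∑ j ∈ Finset.range m, (s (2*j) - s (2*j+1)))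
    (hS1 : (∑ j ∈ Finset.range m, (s (2*j) - s (2*j+1))) < 1) :
    (∑ j ∈ Finset.range m, (g (2*j) - g (2*j+1))) ^ 2
      ≤ M * ((∑ j ∈ Finset.range m, (s (2*j) - s (2*j+1)))
            * (1 - ∑ j ∈ Finset.range m, (s (2*j) - s (2*j+1)))) := by
  have hP0' : ((0:ℝ),(0:ℝ)) ∈ (↑N : Set (ℝ × ℝ)) := by exact_mod_cast hP0
  have hP1' : ((1:ℝ),(0:ℝ)) ∈ (↑N : Set (ℝ × ℝ)) := by exact_mod_cast hP1
  have hs01 : ∀ k, 0 ≤ s k ∧ s k ≤ 1 := by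
    intro k
    have := hbox _ (hnode k)
    exact ⟨this.1, this.2.1⟩
  have hg0 : ∀ k, 0 ≤ g k := fun k => (hbox _ (hnode k)).2.2
  have hphi_eq : ∀ k, phi (↑N) (s k) = g k := by
    intro k
    refine le_antisymm ?_ ?_
    · exact phi_le_node hP0 hP1 hbox htie htri (hnode k)
    · exact phi_ge_node hMajne (by exact_mod_cast hnode k)
  set R : ℕ → ℝ := fun j => ∑ l ∈ Finset.Ico j m, (s (2*l) - s (2*l+1)) with hRdef
  set E : ℕ → ℝ := fun j => ∑ l ∈ Finset.Ico j m, (g (2*l) - g (2*l+1)) with hEdef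
  have hR0 : R 0 = ∑ j ∈ Finset.range m, (s (2*j) - s (2*j+1)) := by
    show (∑ l ∈ Finset.Ico 0 m, (s (2*l) - s (2*l+1))) = _
    rw [Finset.range_eq_Ico]
  have hE0 : E 0 = ∑ j ∈ Finset.range m, (g (2*j) - g (2*j+1)) := by
    show (∑ l ∈ Finset.Ico 0 m, (g (2*l) - g (2*l+1))) = _
    rw [Finset.range_eq_Ico]
  have hdnn : ∀ l, 0 ≤ s (2*l) - s (2*l+1) := by
    intro l
    have := hmono (2*l) (2*l+1) (by omega)
    linarith
  have hRsplit : ∀ j, j < m → R j = (s (2*j) - s (2*j+1)) + R (j+1) := by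
    intro j hj
    rw [hRdef]
    exact Finset.sum_eq_sum_Ico_succ_bot hj _
  have hEsplit : ∀ j, j < m → E j = (g (2*j) - g (2*j+1)) + E (j+1) := by
    intro j hj
    rw [hEdef]
    exact Finset.sum_eq_sum_Ico_succ_bot hj _
  have hRnn : ∀ j, 0 ≤ R j := by
    intro j
    apply Finset.sum_nonneg
    intro l _
    exact hdnn l
  have hRle0 : ∀ j, R j ≤ R 0 := by
    intro j
    apply Finset.sum_le_sum_of_subset_of_nonneg
    · exact Finset.Ico_subset_Ico (Nat.zero_le j) le_rfl
    · intro l _ _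
      exact hdnn l
  -- upper telescope, downward induction
  have C12 : ∀ t j, m = j + t → R j ≤ s (2*j) ∧ E j ≤ phi (↑N) (R j) := by
    intro t
    induction t with
    | zero =>
      intro j hj
      have hjm : j = m := by omega
      subst hjm
      have hRm : R j = 0 := by
        show (∑ l ∈ Finset.Ico j j, (s (2*l) - s (2*l+1))) = 0
        rw [Finset.Ico_self, Finset.sum_empty]
      have hEm : E j = 0 := by
        show (∑ l ∈ Finset.Ico j j, (g (2*l) - g (2*l+1))) = 0
        rw [Finset.Ico_self, Finset.sum_empty]
      rw [hRm, hEm]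
      constructor
      · exact (hs01 (2*j)).1
      · exact phi_nonneg hP0' hP1' hMajne le_rfl zero_le_one
    | succ t ih =>
      intro j hj
      have hjm : j < m := by omega
      obtain ⟨ih1, ih2⟩ := ih (j+1) (by omega)
      have hRj := hRsplit j hjm
      have hEj := hEsplit j hjm
      have hlo : R (j+1) ≤ s (2*j+1) := by
        have h1 : s (2*(j+1)) ≤ s (2*j+1) := hmono _ _ (by omega)
        linarith
      constructor
      · have h2 : s (2*j+1) ≤ s (2*j) := hmono _ _ (by omega)
        rw [hRj]
        linarith
      · have h4 := phi_fourpoint (P := (↑N : Set (ℝ × ℝ))) hP0' hP1' hMajne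
          (lo := R (j+1)) (hi := s (2*j)) (p := s (2*j+1))
          (hRnn (j+1)) (hs01 (2*j)).2 hlo (hmono _ _ (by omega))
        have harg : R (j+1) + s (2*j) - s (2*j+1) = R j := by
          rw [hRj]; ring
        rw [harg, hphi_eq (2*j), hphi_eq (2*j+1)] at h4
        rw [hEj]
        have := hphi_eq (2*j)
        linarith [h4, ih2]
  -- lower telescope, upward induction
  set W : ℕ → ℝ := fun j => ∑ l ∈ Finset.range j, (g (2*l+1) - g (2*l)) with hWdef
  have hWsplit : ∀ j, W (j+1) = W j + (g (2*j+1) - g (2*j)) := by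
    intro j
    rw [hWdef]
    exact Finset.sum_range_succ _ _
  have hee : ∀ j, j ≤ m → 1 - R 0 + R j ≤ 1 := by
    intro j _
    have := hRle0 j
    linarith
  have C3 : ∀ j, j ≤ m → s (2*j) ≤ 1 - R 0 + R j ∧
      W j + phi (↑N) 1 ≤ phi (↑N) (1 - R 0 + R j) := by
    intro j
    induction j with
    | zero =>
      intro _
      constructor
      · have := (hs01 0).2
        simpa using this
      · have : W 0 = 0 := by rw [hWdef]; simp
        rw [this]
        have harg : 1 - R 0 + R 0 = 1 := by ring
        rw [harg]
        linarith
    | succ j ih =>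
      intro hjm
      obtain ⟨ih1, ih2⟩ := ih (by omega)
      have hjm' : j < m := by omega
      have hRj := hRsplit j hjm'
      have hstep : 1 - R 0 + R (j+1) = (1 - R 0 + R j) - (s (2*j) - s (2*j+1)) := by
        rw [hRj]; ring
      constructor
      · have h1 : s (2*(j+1)) ≤ s (2*j+1) := hmono _ _ (by omega)
        rw [hstep]
        linarith
      · have h4 := phi_fourpoint (P := (↑N : Set (ℝ × ℝ))) hP0' hP1' hMajne
          (lo := s (2*j+1)) (hi := 1 - R 0 + R j) (p := s (2*j))
          (hs01 (2*j+1)).1 (hee j (by omega)) (hmono _ _ (by omega)) ih1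
        have harg : s (2*j+1) + (1 - R 0 + R j) - s (2*j) = 1 - R 0 + R (j+1) := by
          rw [hstep]; ring
        rw [harg, hphi_eq (2*j), hphi_eq (2*j+1)] at h4
        rw [hWsplit j]
        linarith [h4, ih2]
  -- combine
  set S : ℝ := ∑ j ∈ Finset.range m, (s (2*j) - s (2*j+1)) with hSdef
  set D : ℝ := ∑ j ∈ Finset.range m, (g (2*j) - g (2*j+1)) with hDdef
  set B : ℝ := Real.sqrt M * Real.sqrt (S * (1 - S)) with hBdef
  have hval' : ∀ q ∈ (↑N : Set (ℝ × ℝ)), q.2 ^ 2 ≤ M * (q.1 * (1 - q.1)) := by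
    intro q hq
    exact hval q (by exact_mod_cast hq)
  have hbox' : ∀ q ∈ (↑N : Set (ℝ × ℝ)), 0 ≤ q.1 ∧ q.1 ≤ 1 ∧ 0 ≤ q.2 := by
    intro q hq
    exact hbox q (by exact_mod_cast hq)
  have hub : D ≤ B := by
    obtain ⟨_, h2⟩ := C12 m 0 (by omega)
    rw [hR0, hE0] at h2
    have h3 := phi_le_tangent hP0' hP1' hM hbox' hval' hS0 hS1
    rw [hBdef]
    linarith
  have hlb : -B ≤ D := by
    obtain ⟨_, h2⟩ := C3 m le_rfl
    have hWm : W m = -D := by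
      rw [hWdef, hDdef, ← Finset.sum_neg_distrib]
      apply Finset.sum_congr rfl
      intro l _
      ring
    have hRm : R m = 0 := by
      show (∑ l ∈ Finset.Ico m m, (s (2*l) - s (2*l+1))) = 0
      rw [Finset.Ico_self, Finset.sum_empty]
    rw [hWm, hRm, hR0] at h2
    have harg : 1 - S + 0 = 1 - S := by ring
    rw [harg] at h2
    have h3 := phi_le_tangent hP0' hP1' hM hbox' hval'
      (show (0:ℝ) < 1 - S by linarith) (show (1:ℝ) - S < 1 by linarith)
    have harg2 : (1 - S) * (1 - (1 - S)) = S * (1 - S) := by ring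
    rw [harg2] at h3
    have hphi1 : 0 ≤ phi (↑N) 1 := phi_nonneg hP0' hP1' hMajne zero_le_one le_rfl
    rw [hBdef]
    linarith
  have hB2 : B ^ 2 = M * (S * (1 - S)) := by
    rw [hBdef, mul_pow, Real.sq_sqrt hM, Real.sq_sqrt (by nlinarith : (0:ℝ) ≤ S * (1 - S))]
  calc D ^ 2 ≤ B ^ 2 := sq_le_sq' hlb hub
    _ = M * (S * (1 - S)) := hB2

end Master


end AltSum


/-- alternating-sum bound (δ = 0 case): for `x₁ ≥ ... ≥ xₙ`,
`D²/(S(1-S)) ≤ maxᵢ η(xᵢ) ≤ 4 f(0)²` where `D = Σ (-1)^{i+1} f(xᵢ)` and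
`S = Σ (-1)^{i+1} F(xᵢ)`. -/
theorem alternating_sum_eta_bound
    (f F η : ℝ → ℝ)
    (hf_nonneg : ∀ x, 0 ≤ f x)
    (hf_int : Integrable f)
    (hf_mass : ∫ x, f x = 1)
    (hf_symm : ∀ x, f (-x) = f x)
    (hf_logconc : ∀ x y : ℝ, ∀ a b : ℝ, 0 ≤ a → 0 ≤ b → a + b = 1 →
      f x ^ a * f y ^ b ≤ f (a * x + b * y))
    (hF : ∀ x, F x = ∫ t in Iic x, f t)
    (hη : ∀ x, η x = f x ^ 2 / (F x * (1 - F x)))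
    (hη_mono : ∀ a b : ℝ, |a| ≤ |b| → η b ≤ η a)
    (hη_max : ∀ a : ℝ, a ≠ 0 → η a < η 0)
    (hη0 : η 0 = 4 * f 0 ^ 2)
    (n : ℕ) (hn : 0 < n) (x : Fin n → ℝ)
    (hx_sorted : ∀ i j : Fin n, i ≤ j → x j ≤ x i)
    (S D : ℝ)
    (hD : D = ∑ i : Fin n, (-1 : ℝ) ^ (i : ℕ) * f (x i))
    (hS : S = ∑ i : Fin n, (-1 : ℝ) ^ (i : ℕ) * F (x i))
    (hS0 : 0 < S) (hS1 : S < 1) :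
    D ^ 2 / (S * (1 - S)) ≤
      Finset.univ.sup'
        (Finset.univ_nonempty_iff.mpr (Fin.pos_iff_nonempty.mp hn))
        (fun i => η (x i)) ∧
    Finset.univ.sup'
        (Finset.univ_nonempty_iff.mpr (Fin.pos_iff_nonempty.mp hn))
        (fun i => η (x i)) ≤ 4 * f 0 ^ 2 := by

  have hη' : ∀ z, η z = f z ^ 2 / ((∫ t in Iic z, f t) * (1 - ∫ t in Iic z, f t)) := by
    intro z
    rw [hη z, hF z]
  have hF01 : ∀ y, 0 ≤ F y ∧ F y ≤ 1 := by
    intro y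
    rw [hF y]
    exact ⟨AltSum.F_nonneg hf_nonneg y, AltSum.F_le_one hf_nonneg hf_int hf_mass y⟩
  have hFm : ∀ a b : ℝ, a ≤ b → F a ≤ F b := by
    intro a b hab
    rw [hF a, hF b]
    exact AltSum.F_mono hf_nonneg hf_int hab
  have hFstrict : ∀ a b : ℝ, F a < F b → a < b := by
    intro a b hab
    by_contra hcon
    push_neg at hcon
    exact absurd (hFm b a hcon) (by linarith)
  have hedge0 : ∀ y, F y = 0 → f y = 0 := by
    intro y hy
    rw [hF y] at hy
    exact AltSum.edge_left hf_nonneg hf_int hf_mass hf_logconc hη' hη_mono hy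
  have hedge1 : ∀ y, F y = 1 → f y = 0 := by
    intro y hy
    rw [hF y] at hy
    exact AltSum.edge_right hf_nonneg hf_int hf_mass hf_symm hf_logconc hη' hη_mono hy
  have htiex : ∀ y z : ℝ, y ≤ z → F y = F z → f y = f z := by
    intro y z hyz hFeq
    rw [hF y, hF z] at hFeq
    exact AltSum.tie_lemma hf_nonneg hf_int hf_mass hf_symm hf_logconc hη' hη_mono hyz hFeq
  have hηnn : ∀ y, 0 ≤ η y := by
    intro y
    rw [hη y]
    apply div_nonneg (sq_nonneg _)
    apply mul_nonneg (hF01 y).1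
    linarith [(hF01 y).2]
  -- the second claim
  have hupper : ∀ i : Fin n,
      η (x i) ≤ 4 * f 0 ^ 2 := by
    intro i
    calc η (x i) ≤ η 0 := hη_mono 0 (x i) (by rw [abs_zero]; exact abs_nonneg _)
      _ = 4 * f 0 ^ 2 := hη0
  refine ⟨?_, Finset.sup'_le _ _ (fun i _ => hupper i)⟩
  -- notation for the sup
  set Mx : ℝ := Finset.univ.sup'
      (Finset.univ_nonempty_iff.mpr (Fin.pos_iff_nonempty.mp hn))
      (fun i => η (x i)) with hMx
  have hMge : ∀ i : Fin n, η (x i) ≤ Mx := by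
    intro i
    rw [hMx]
    exact Finset.le_sup' (fun j : Fin n => η (x j)) (Finset.mem_univ i)
  have hM0 : 0 ≤ Mx := le_trans (hηnn (x ⟨0, hn⟩)) (hMge ⟨0, hn⟩)
  -- node set
  set N : Finset (ℝ × ℝ) := insert ((0:ℝ),(0:ℝ)) (insert ((1:ℝ),(0:ℝ))
      (Finset.image (fun i : Fin n => (F (x i), f (x i))) Finset.univ)) with hN
  have hP0 : ((0:ℝ),(0:ℝ)) ∈ N := by rw [hN]; simp
  have hP1 : ((1:ℝ),(0:ℝ)) ∈ N := by rw [hN]; simp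
  have hmemN : ∀ q ∈ N, q = ((0:ℝ),(0:ℝ)) ∨ q = ((1:ℝ),(0:ℝ)) ∨
      ∃ i : Fin n, (F (x i), f (x i)) = q := by
    intro q hq
    rw [hN] at hq
    simp only [Finset.mem_insert, Finset.mem_image, Finset.mem_univ, true_and] at hq
    tauto
  have hnodemem : ∀ i : Fin n, ((F (x i), f (x i)) : ℝ × ℝ) ∈ N := by
    intro i
    rw [hN]
    simp only [Finset.mem_insert, Finset.mem_image, Finset.mem_univ, true_and]
    right; right
    exact ⟨i, rfl⟩
  have hbox : ∀ q ∈ N, 0 ≤ q.1 ∧ q.1 ≤ 1 ∧ 0 ≤ q.2 := by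
    intro q hq
    rcases hmemN q hq with rfl | rfl | ⟨i, rfl⟩
    · norm_num
    · norm_num
    · exact ⟨(hF01 (x i)).1, (hF01 (x i)).2, hf_nonneg _⟩
  have htie : ∀ q ∈ N, ∀ q' ∈ N, q.1 = q'.1 → q.2 = q'.2 := by
    intro q hq q' hq' heq
    rcases hmemN q hq with rfl | rfl | ⟨i, rfl⟩ <;>
      rcases hmemN q' hq' with rfl | rfl | ⟨j, rfl⟩
    · rfl
    · norm_num at heq
    · simp only at heq ⊢
      exact (hedge0 (x j) heq.symm).symm
    · norm_num at heq
    · rfl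
    · simp only at heq ⊢
      exact (hedge1 (x j) heq.symm).symm
    · simp only at heq ⊢
      exact hedge0 (x i) heq
    · simp only at heq ⊢
      exact hedge1 (x i) heq
    · simp only at heq ⊢
      rcases le_total (x i) (x j) with h | h
      · exact htiex _ _ h heq
      · exact (htiex _ _ h heq.symm).symm
  have htri : ∀ q ∈ N, ∀ q' ∈ N, ∀ q'' ∈ N, q.1 < q'.1 → q'.1 < q''.1 →
      q.2 * (q''.1 - q'.1) + q''.2 * (q'.1 - q.1) ≤ q'.2 * (q''.1 - q.1) := by
    intro q hq q' hq' q'' hq'' h1 h2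
    rcases hmemN q' hq' with rfl | rfl | ⟨j, rfl⟩
    · -- q' = (0,0) : q.1 < 0 impossible
      exact absurd h1 (not_lt.mpr (hbox q hq).1)
    · -- q' = (1,0) : q''.1 > 1 impossible
      exact absurd h2 (not_lt.mpr (hbox q'' hq'').2.1)
    · rcases hmemN q hq with rfl | rfl | ⟨i, rfl⟩
      · -- q = (0,0)
        rcases hmemN q'' hq'' with rfl | rfl | ⟨k, rfl⟩
        · simp only at h2 h1
          linarith [(hF01 (x j)).1]
        · -- (0,0), node j, (1,0) : 0 ≤ f (x j)
          simp only
          ring_nf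
          nlinarith [hf_nonneg (x j)]
        · -- (0,0), node j, node k : reverse hazard
          simp only at h1 h2 ⊢
          have hxjk : x j < x k := hFstrict _ _ h2
          have := AltSum.ratio_fF hf_nonneg hf_int hf_logconc hxjk.le
          rw [← hF (x j), ← hF (x k)] at this
          nlinarith [this]
      · -- q = (1,0) : q'.1 > 1 impossible
        exact absurd (lt_trans h1 h2) (not_lt.mpr (hbox q'' hq'').2.1)
      · rcases hmemN q'' hq'' with rfl | rfl | ⟨k, rfl⟩
        · simp only at h2
          linarith [(hF01 (x j)).1, h1, h2]
        · -- node i, node j, (1,0) : hazard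
          simp only at h1 h2 ⊢
          have hxij : x i < x j := hFstrict _ _ h1
          have := AltSum.ratio_hazard hf_nonneg hf_int hf_mass hf_logconc hxij.le
          rw [← hF (x i), ← hF (x j)] at this
          nlinarith [this]
        · -- three real nodes
          simp only at h1 h2 ⊢
          have hxij : x i < x j := hFstrict _ _ h1
          have hxjk : x j < x k := hFstrict _ _ h2
          have := AltSum.triple_lemma hf_nonneg hf_int hf_symm hf_logconc hxij.le hxjk.le
          rw [← hF (x i), ← hF (x j), ← hF (x k)] at this
          nlinarith [this]
  have hMajne : (AltSum.MajSet (↑N : Set (ℝ × ℝ))).Nonempty := by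
    refine ⟨((0:ℝ), (∑ i : Fin n, f (x i)) + 1), ?_⟩
    intro q hq
    have hqN : q ∈ N := hq
    have hsum : 0 ≤ ∑ i : Fin n, f (x i) :=
      Finset.sum_nonneg (fun i _ => hf_nonneg (x i))
    rcases hmemN q hqN with rfl | rfl | ⟨i, rfl⟩
    · simp only
      linarith
    · simp only
      linarith
    · simp only
      have : f (x i) ≤ ∑ j : Fin n, f (x j) :=
        Finset.single_le_sum (fun j _ => hf_nonneg (x j)) (Finset.mem_univ i)
      linarith
  have hval : ∀ q ∈ N, q.2 ^ 2 ≤ Mx * (q.1 * (1 - q.1)) := by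
    intro q hq
    rcases hmemN q hq with rfl | rfl | ⟨i, rfl⟩
    · simp only
      norm_num
    · simp only
      norm_num
    · simp only
      rcases eq_or_lt_of_le (mul_nonneg (hF01 (x i)).1 (by linarith [(hF01 (x i)).2] :
          (0:ℝ) ≤ 1 - F (x i))) with hz | hz
    -- denominator zero or positive
      · have : F (x i) = 0 ∨ 1 - F (x i) = 0 := mul_eq_zero.mp hz.symm
        have hfz : f (x i) = 0 := by
          rcases this with h | h
          · exact hedge0 _ h
          · exact hedge1 _ (by linarith)
        rw [hfz, ← hz]
        norm_num
      · have hMi := hMge i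
        rw [hη (x i)] at hMi
        calc f (x i) ^ 2 = (f (x i) ^ 2 / (F (x i) * (1 - F (x i)))) * (F (x i) * (1 - F (x i))) := by
              rw [div_mul_cancel₀ _ hz.ne']
          _ ≤ Mx * (F (x i) * (1 - F (x i))) := by
              apply mul_le_mul_of_nonneg_right hMi hz.le
  -- sequences
  set m : ℕ := (n+1)/2 with hm
  set sq : ℕ → ℝ := fun k => if h : k < n then F (x ⟨k, h⟩) else 0 with hsq
  set gq : ℕ → ℝ := fun k => if h : k < n then f (x ⟨k, h⟩) else 0 with hgq
  have hsqlt : ∀ k (h : k < n), sq k = F (x ⟨k, h⟩) := by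
    intro k h
    rw [hsq]
    simp [h]
  have hgqlt : ∀ k (h : k < n), gq k = f (x ⟨k, h⟩) := by
    intro k h
    rw [hgq]
    simp [h]
  have hsqge : ∀ k, n ≤ k → sq k = 0 := by
    intro k h
    rw [hsq]
    simp [Nat.not_lt.mpr h]
  have hgqge : ∀ k, n ≤ k → gq k = 0 := by
    intro k h
    rw [hgq]
    simp [Nat.not_lt.mpr h]
  have hnode : ∀ k, ((sq k, gq k) : ℝ × ℝ) ∈ N := by
    intro k
    by_cases h : k < n
    · rw [hsqlt k h, hgqlt k h]
      exact hnodemem ⟨k, h⟩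
    · rw [hsqge k (Nat.not_lt.mp h), hgqge k (Nat.not_lt.mp h)]
      exact hP0
  have hmono : ∀ k l, k ≤ l → sq l ≤ sq k := by
    intro k l hkl
    by_cases hl : l < n
    · have hk : k < n := lt_of_le_of_lt hkl hl
      rw [hsqlt k hk, hsqlt l hl]
      apply hFm
      exact hx_sorted ⟨k, hk⟩ ⟨l, hl⟩ hkl
    · rw [hsqge l (Nat.not_lt.mp hl)]
      rcases Nat.lt_or_ge k n with hk | hk
      · rw [hsqlt k hk]
        exact (hF01 _).1
      · rw [hsqge k hk]
  -- sum identities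
  have hsum_s : S = ∑ j ∈ Finset.range m, (sq (2*j) - sq (2*j+1)) := by
    rw [hS, ← AltSum.sum_pairs sq m]
    have h1 : ∑ i : Fin n, (-1:ℝ)^(i:ℕ) * F (x i) = ∑ i ∈ Finset.range n, (-1:ℝ)^i * sq i := by
      rw [← Fin.sum_univ_eq_sum_range (fun k => (-1:ℝ)^k * sq k) n]
      apply Finset.sum_congr rfl
      intro i _
      rw [hsqlt i i.isLt]
    rw [h1]
    have h2m : 2*m = n ∨ 2*m = n + 1 := by omega
    rcases h2m with h | h
    · rw [h]
    · rw [h, Finset.sum_range_succ, hsqge n le_rfl]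
      ring
  have hsum_g : D = ∑ j ∈ Finset.range m, (gq (2*j) - gq (2*j+1)) := by
    rw [hD, ← AltSum.sum_pairs gq m]
    have h1 : ∑ i : Fin n, (-1:ℝ)^(i:ℕ) * f (x i) = ∑ i ∈ Finset.range n, (-1:ℝ)^i * gq i := by
      rw [← Fin.sum_univ_eq_sum_range (fun k => (-1:ℝ)^k * gq k) n]
      apply Finset.sum_congr rfl
      intro i _
      rw [hgqlt i i.isLt]
    rw [h1]
    have h2m : 2*m = n ∨ 2*m = n + 1 := by omega
    rcases h2m with h | h
    · rw [h]
    · rw [h, Finset.sum_range_succ, hgqge n le_rfl]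
      ring
  have hmaster := AltSum.master hP0 hP1 hbox htie htri hMajne hM0 hval m sq gq
    hnode hmono (hsum_s ▸ hS0) (hsum_s ▸ hS1)
  rw [← hsum_s, ← hsum_g] at hmaster
  rw [div_le_iff₀ (mul_pos hS0 (by linarith))]
  linarith [hmaster]
end

section
/- Let X have symmetric log-concave density f with η(x) = f(x)²/(F(x)(1-F(x))) non-increasing in |x|, and let B = 1 if X - θ ∈ A and B = -1 otherwise, where A is a finite union of disjoint intervals. Then the Fisher information of B with respect to the location parameter θ, namely I_θ = (d/dθ P(B=1|θ))² / (P(B=1|θ)(1 - P(B=1|θ))), satisfies I_θ ≤ 4 f(0)². -/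
open MeasureTheory Set Filter Topology

section OBFBAux
variable (f : ℝ → ℝ) (F : ℝ → ℝ)

theorem obfb_lc4 (hf_nonneg : ∀ x, 0 ≤ f x)
    (hf_logconc : ∀ x y : ℝ, ∀ a b : ℝ, 0 ≤ a → 0 ≤ b → a + b = 1 →
      f x ^ a * f y ^ b ≤ f (a * x + b * y))
    {u v w z : ℝ} (huv : u ≤ v) (huw : u ≤ w) (hvz : v ≤ z) (hwz : w ≤ z)
    (hsum : v + w = u + z) : f u * f z ≤ f v * f w := by
  rcases eq_or_lt_of_le (huv.trans hvz) with hEq | huz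
  · have hv : v = u := le_antisymm (by linarith) huv
    have hw : w = u := le_antisymm (by linarith) huw
    rw [← hEq, hv, hw]
  rcases (hf_nonneg u).eq_or_lt with hu0 | hu0
  · rw [← hu0, zero_mul]; exact mul_nonneg (hf_nonneg v) (hf_nonneg w)
  rcases (hf_nonneg z).eq_or_lt with hz0 | hz0
  · rw [← hz0, mul_zero]; exact mul_nonneg (hf_nonneg v) (hf_nonneg w)
  have hne : z - u ≠ 0 := ne_of_gt (by linarith)
  have hAB : (z - v) / (z - u) + (v - u) / (z - u) = 1 := by field_simp; ring
  have hA0 : 0 ≤ (z - v) / (z - u) := div_nonneg (by linarith) (by linarith)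
  have hB0 : 0 ≤ (v - u) / (z - u) := div_nonneg (by linarith) (by linarith)
  have h1 : f u ^ ((z - v) / (z - u)) * f z ^ ((v - u) / (z - u)) ≤ f v := by
    have := hf_logconc u z _ _ hA0 hB0 hAB
    have hv : (z - v) / (z - u) * u + (v - u) / (z - u) * z = v := by
      rw [div_mul_eq_mul_div, div_mul_eq_mul_div, ← add_div, div_eq_iff hne]; ring
    rwa [hv] at this
  have h2 : f u ^ ((v - u) / (z - u)) * f z ^ ((z - v) / (z - u)) ≤ f w := by
    have := hf_logconc u z _ _ hB0 hA0 (by linarith)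
    have hw : (v - u) / (z - u) * u + (z - v) / (z - u) * z = w := by
      have hvw : w = u + z - v := by linarith
      rw [div_mul_eq_mul_div, div_mul_eq_mul_div, ← add_div, div_eq_iff hne, hvw]; ring
    rwa [hw] at this
  have hmul : (f u ^ ((z - v) / (z - u)) * f z ^ ((v - u) / (z - u))) *
      (f u ^ ((v - u) / (z - u)) * f z ^ ((z - v) / (z - u))) ≤ f v * f w :=
    mul_le_mul h1 h2 (by positivity) (hf_nonneg v)
  refine le_trans (le_of_eq ?_) hmul
  rw [show (f u ^ ((z - v) / (z - u)) * f z ^ ((v - u) / (z - u))) *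
      (f u ^ ((v - u) / (z - u)) * f z ^ ((z - v) / (z - u)))
      = (f u ^ ((z - v) / (z - u)) * f u ^ ((v - u) / (z - u))) *
        (f z ^ ((z - v) / (z - u)) * f z ^ ((v - u) / (z - u))) by ring,
    ← Real.rpow_add hu0, ← Real.rpow_add hz0, hAB, Real.rpow_one, Real.rpow_one]

theorem obfb_derivRatio (hf_nonneg : ∀ x, 0 ≤ f x)
    (hf_logconc : ∀ x y : ℝ, ∀ a b : ℝ, 0 ≤ a → 0 ≤ b → a + b = 1 →
      f x ^ a * f y ^ b ≤ f (a * x + b * y))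
    (hf_diff : ContDiff ℝ 1 f)
    {x y : ℝ} (hxy : x ≤ y) : f x * deriv f y ≤ deriv f x * f y := by
  rcases eq_or_lt_of_le hxy with rfl | hlt
  · exact le_of_eq (mul_comm _ _)
  have hdf : Differentiable ℝ f := hf_diff.differentiable one_ne_zero
  set φ : ℝ → ℝ := fun t => f (x + t) * f y - f x * f (y + t) with hφ
  have hd : HasDerivAt φ (deriv f x * f y - f x * deriv f y) 0 := by
    have h1 : HasDerivAt (fun t : ℝ => f (x + t)) (deriv f x) 0 := by
      have inner : HasDerivAt (fun t : ℝ => x + t) 1 0 := by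
        simpa using (hasDerivAt_id (0:ℝ)).const_add x
      have outer : HasDerivAt f (deriv f (x + 0)) (x + 0) := (hdf (x + 0)).hasDerivAt
      simpa [Function.comp_def] using outer.comp 0 inner
    have h2 : HasDerivAt (fun t : ℝ => f (y + t)) (deriv f y) 0 := by
      have inner : HasDerivAt (fun t : ℝ => y + t) 1 0 := by
        simpa using (hasDerivAt_id (0:ℝ)).const_add y
      have outer : HasDerivAt f (deriv f (y + 0)) (y + 0) := (hdf (y + 0)).hasDerivAt
      simpa [Function.comp_def] using outer.comp 0 inner
    exact (h1.mul_const (f y)).sub (h2.const_mul (f x))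
  have hslope : Tendsto (slope φ 0) (𝓝[>] 0) (𝓝 (deriv f x * f y - f x * deriv f y)) :=
    (hasDerivAt_iff_tendsto_slope.mp hd).mono_left
      (nhdsWithin_mono 0 (fun t ht => ne_of_gt ht))
  have hev : ∀ᶠ t in 𝓝[>] (0:ℝ), 0 ≤ slope φ 0 t := by
    filter_upwards [Ioo_mem_nhdsGT_of_mem (Set.left_mem_Ico.mpr (by linarith : (0:ℝ) < y - x))]
      with t ht
    have hφt : 0 ≤ φ t := by
      have := obfb_lc4 f hf_nonneg hf_logconc (u := x) (v := x + t) (w := y) (z := y + t)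
        (by linarith [ht.1]) hxy (by linarith) (by linarith [ht.1]) (by ring)
      simp only [hφ]; nlinarith [this]
    have hφ0 : φ 0 = 0 := by simp [hφ, mul_comm]
    rw [slope_def_field, hφ0]
    simp only [sub_zero]
    exact div_nonneg hφt ht.1.le
  exact sub_nonneg.mp (ge_of_tendsto hslope hev)

theorem obfb_Fdiff (hf_int : Integrable f) (hF : ∀ x, F x = ∫ t in Iic x, f t)
    {x y : ℝ} (hxy : x ≤ y) : F y - F x = ∫ t in x..y, f t := by
  rw [hF, hF, intervalIntegral.integral_of_le hxy,
    ← Iic_union_Ioc_eq_Iic hxy,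
    setIntegral_union (Iic_disjoint_Ioc le_rfl) measurableSet_Ioc
      hf_int.integrableOn hf_int.integrableOn]
  ring

theorem obfb_Fmono (hf_nonneg : ∀ x, 0 ≤ f x) (hf_int : Integrable f)
    (hF : ∀ x, F x = ∫ t in Iic x, f t) {x y : ℝ} (hxy : x ≤ y) : F x ≤ F y := by
  have h := obfb_Fdiff f F hf_int hF hxy
  have : 0 ≤ ∫ t in x..y, f t :=
    intervalIntegral.integral_nonneg hxy (fun u _ => hf_nonneg u)
  linarith

theorem obfb_F0 (hf_nonneg : ∀ x, 0 ≤ f x) (hF : ∀ x, F x = ∫ t in Iic x, f t) (x : ℝ) :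
    0 ≤ F x := by
  rw [hF]; exact setIntegral_nonneg measurableSet_Iic (fun t _ => hf_nonneg t)

theorem obfb_F1 (hf_nonneg : ∀ x, 0 ≤ f x) (hf_int : Integrable f) (hf_mass : ∫ x, f x = 1)
    (hF : ∀ x, F x = ∫ t in Iic x, f t) (x : ℝ) : F x ≤ 1 := by
  rw [hF, ← hf_mass]
  exact setIntegral_le_integral hf_int (Eventually.of_forall hf_nonneg)

theorem obfb_Fc (hf_int : Integrable f) (hf_mass : ∫ x, f x = 1)
    (hF : ∀ x, F x = ∫ t in Iic x, f t) (x : ℝ) : 1 - F x = ∫ t in Ioi x, f t := by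
  have : (∫ t in Iic x, f t) + ∫ t in Ioi x, f t = 1 := by
    rw [← hf_mass, ← setIntegral_union (Iic_disjoint_Ioi le_rfl) measurableSet_Ioi
      hf_int.integrableOn hf_int.integrableOn, Iic_union_Ioi, setIntegral_univ]
  rw [hF]; linarith

theorem obfb_Fcont (hf_int : Integrable f) (hf_diff : ContDiff ℝ 1 f)
    (hF : ∀ x, F x = ∫ t in Iic x, f t) : Continuous F := by
  have hc : Continuous f := hf_diff.continuous
  have hrepr : F = fun y => F 0 + ∫ t in (0:ℝ)..y, f t := by
    funext y
    rcases le_total (0:ℝ) y with h | h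
    · have := obfb_Fdiff f F hf_int hF h; linarith
    · have := obfb_Fdiff f F hf_int hF h
      rw [intervalIntegral.integral_symm]
      linarith
  rw [hrepr]
  exact continuous_const.add
    (intervalIntegral.continuous_primitive (fun a b => hc.intervalIntegrable a b) 0)

theorem obfb_zero_on_Icc (hf_nonneg : ∀ x, 0 ≤ f x) (hf_diff : ContDiff ℝ 1 f)
    {A B : ℝ} (hAB : A < B) (hzero : (∫ t in A..B, f t) = 0) :
    ∀ t ∈ Icc A B, f t = 0 := by
  have hc : Continuous f := hf_diff.continuous
  intro t ht
  by_contra hne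
  have hpos : 0 < f t := (hf_nonneg t).lt_of_ne (Ne.symm hne)
  obtain ⟨δ, hδ, hball⟩ := Metric.continuousAt_iff.mp hc.continuousAt (f t / 2) (by linarith)
  set α := max A (t - δ/2) with hα
  set β := min B (t + δ/2) with hβ
  have hαβ : α < β := by
    simp only [hα, hβ, lt_min_iff, max_lt_iff]
    constructor
    · exact ⟨hAB, by linarith [ht.2]⟩
    · exact ⟨by linarith [ht.1], by linarith⟩
  have hlow : ∀ u ∈ Icc α β, f t / 2 ≤ f u := by
    intro u hu
    have : |u - t| < δ := by
      have h1' : t - δ/2 ≤ u := le_trans (le_max_right A _) hu.1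
      have h2' : u ≤ t + δ/2 := le_trans hu.2 (min_le_right B _)
      rw [abs_lt]; constructor <;> linarith
    have := hball (show dist u t < δ by rwa [Real.dist_eq])
    rw [Real.dist_eq, abs_lt] at this
    linarith [this.1]
  have h1 : (0:ℝ) < f t / 2 * (β - α) := by
    have := hαβ; nlinarith
  have h2 : f t / 2 * (β - α) ≤ ∫ u in α..β, f u := by
    have := intervalIntegral.integral_mono_on (μ := volume) hαβ.le
      (intervalIntegrable_const (c := f t / 2)) (hc.intervalIntegrable α β) hlow
    simp only [intervalIntegral.integral_const, smul_eq_mul] at this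
    linarith
  have h3 : (∫ u in α..β, f u) ≤ ∫ u in A..B, f u := by
    apply intervalIntegral.integral_mono_interval (le_max_left A _)
      hαβ.le (min_le_left B _)
      (Eventually.of_forall (fun u => hf_nonneg u)) (hc.intervalIntegrable A B)
  rw [hzero] at h3
  linarith

theorem obfb_Fhalf (hf_int : Integrable f) (hf_mass : ∫ x, f x = 1)
    (hf_symm : ∀ x, f (-x) = f x)
    (hF : ∀ x, F x = ∫ t in Iic x, f t) : F 0 = 1/2 := by
  have h1 : 1 - F 0 = ∫ t in Ioi (0:ℝ), f t := obfb_Fc f F hf_int hf_mass hF 0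
  have h2 : (∫ t in Ioi (0:ℝ), f t) = ∫ t in Iic (0:ℝ), f t := by
    rw [show (∫ t in Ioi (0:ℝ), f t) = ∫ t in Ioi (0:ℝ), f (-t) from
      (setIntegral_congr_fun measurableSet_Ioi (fun t _ => (hf_symm t).symm)),
      integral_comp_neg_Ioi, neg_zero]
  rw [h2, ← hF 0] at h1
  linarith

theorem obfb_Fneg (hf_int : Integrable f) (hf_mass : ∫ x, f x = 1)
    (hf_symm : ∀ x, f (-x) = f x)
    (hF : ∀ x, F x = ∫ t in Iic x, f t) (x : ℝ) : F (-x) = 1 - F x := by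
  rw [hF, show (∫ t in Iic (-x), f t) = ∫ t in Iic (-x), f (-t) from
      (setIntegral_congr_fun measurableSet_Iic (fun t _ => (hf_symm t).symm)),
    integral_comp_neg_Iic, neg_neg, ← obfb_Fc f F hf_int hf_mass hF x]

theorem obfb_L1 (hf_nonneg : ∀ x, 0 ≤ f x) (hf_int : Integrable f) (hf_diff : ContDiff ℝ 1 f)
    (hF : ∀ x, F x = ∫ t in Iic x, f t) {x : ℝ} (hx : F x = 0) : f x = 0 := by
  have hle : F (x - 1) ≤ F x := obfb_Fmono f F hf_nonneg hf_int hF (by linarith)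
  have hge : 0 ≤ F (x - 1) := obfb_F0 f F hf_nonneg hF _
  have hd := obfb_Fdiff f F hf_int hF (show x - 1 ≤ x by linarith)
  exact obfb_zero_on_Icc f hf_nonneg hf_diff (show x - 1 < x by linarith)
    (by rw [← hd]; linarith) x (by constructor <;> linarith)

theorem obfb_L2 (hf_nonneg : ∀ x, 0 ≤ f x) (hf_int : Integrable f) (hf_mass : ∫ x, f x = 1)
    (hf_diff : ContDiff ℝ 1 f)
    (hF : ∀ x, F x = ∫ t in Iic x, f t) {x : ℝ} (hx : F x = 1) : f x = 0 := by
  have hle : F x ≤ F (x + 1) := obfb_Fmono f F hf_nonneg hf_int hF (by linarith)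
  have hge : F (x + 1) ≤ 1 := obfb_F1 f F hf_nonneg hf_int hf_mass hF _
  have hd := obfb_Fdiff f F hf_int hF (show x ≤ x + 1 by linarith)
  exact obfb_zero_on_Icc f hf_nonneg hf_diff (show x < x + 1 by linarith)
    (by rw [← hd]; linarith) x (by constructor <;> linarith)

theorem obfb_key (hf_nonneg : ∀ x, 0 ≤ f x) (hf_int : Integrable f) (hf_mass : ∫ x, f x = 1)
    (hf_symm : ∀ x, f (-x) = f x) (hf_diff : ContDiff ℝ 1 f)
    (hF : ∀ x, F x = ∫ t in Iic x, f t)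
    (η : ℝ → ℝ) (hη : ∀ x, η x = f x ^ 2 / (F x * (1 - F x)))
    (hη_mono : ∀ a b : ℝ, |a| ≤ |b| → η b ≤ η a) (x : ℝ) :
    f x ≤ 2 * f 0 * Real.sqrt (F x * (1 - F x)) := by
  have h0 : 0 ≤ F x := obfb_F0 f F hf_nonneg hF x
  have h1 : F x ≤ 1 := obfb_F1 f F hf_nonneg hf_int hf_mass hF x
  rcases h0.eq_or_lt with he | hlt0
  · rw [obfb_L1 f F hf_nonneg hf_int hf_diff hF he.symm]
    exact mul_nonneg (by nlinarith [hf_nonneg 0]) (Real.sqrt_nonneg _)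
  rcases h1.eq_or_lt with he | hlt1
  · rw [obfb_L2 f F hf_nonneg hf_int hf_mass hf_diff hF he]
    exact mul_nonneg (by nlinarith [hf_nonneg 0]) (Real.sqrt_nonneg _)
  have hden : 0 < F x * (1 - F x) := by nlinarith
  have hmono := hη_mono 0 x (by simp [abs_nonneg])
  rw [hη, hη, obfb_Fhalf f F hf_int hf_mass hf_symm hF] at hmono
  have h4 : f x ^ 2 ≤ 4 * f 0 ^ 2 * (F x * (1 - F x)) := by
    rw [div_le_div_iff₀ hden (by norm_num)] at hmono
    nlinarith [hmono]
  calc f x = Real.sqrt (f x ^ 2) := (Real.sqrt_sq (hf_nonneg x)).symm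
    _ ≤ Real.sqrt (4 * f 0 ^ 2 * (F x * (1 - F x))) := Real.sqrt_le_sqrt h4
    _ = 2 * f 0 * Real.sqrt (F x * (1 - F x)) := by
        rw [Real.sqrt_mul (by positivity), show (4:ℝ) * f 0 ^ 2 = (2 * f 0)^2 by ring,
          Real.sqrt_sq (by nlinarith [hf_nonneg 0])]

theorem obfb_shiftIoi (g : ℝ → ℝ) (hg : Integrable g) (c d : ℝ) :
    ∫ t in Ioi c, g (t - d) = ∫ t in Ioi (c - d), g t := by
  have h1 : ∫ t in Ioi c, g (t - d) = ∫ t, (Ioi (c - d)).indicator g (t - d) := by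
    rw [← integral_indicator measurableSet_Ioi]
    congr 1
    funext t
    by_cases ht : t ∈ Ioi c
    · rw [indicator_of_mem ht, indicator_of_mem (by simpa [sub_lt_sub_iff_right] using ht)]
    · rw [indicator_of_notMem ht, indicator_of_notMem
        (by simpa [mem_Ioi, sub_lt_sub_iff_right] using ht)]
  rw [h1, integral_sub_right_eq_self ((Ioi (c - d)).indicator g) d,
    integral_indicator measurableSet_Ioi]

theorem obfb_claimE (hf_nonneg : ∀ x, 0 ≤ f x) (hf_int : Integrable f) (hf_mass : ∫ x, f x = 1)
    (hf_logconc : ∀ x y : ℝ, ∀ a b : ℝ, 0 ≤ a → 0 ≤ b → a + b = 1 →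
      f x ^ a * f y ^ b ≤ f (a * x + b * y))
    (hF : ∀ x, F x = ∫ t in Iic x, f t)
    {x y : ℝ} (hxy : x ≤ y) : f x * (1 - F y) ≤ f y * (1 - F x) := by
  rw [obfb_Fc f F hf_int hf_mass hF, obfb_Fc f F hf_int hf_mass hF]
  have hshift : Integrable (fun t => f (t - (y - x))) := hf_int.comp_sub_right (y - x)
  calc f x * ∫ t in Ioi y, f t = ∫ t in Ioi y, f x * f t := by
        rw [MeasureTheory.integral_const_mul]
    _ ≤ ∫ t in Ioi y, f y * f (t - (y - x)) := by
        apply setIntegral_mono_on ((hf_int.const_mul (f x)).integrableOn)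
          ((hshift.const_mul (f y)).integrableOn) measurableSet_Ioi
        intro t ht
        exact obfb_lc4 f hf_nonneg hf_logconc (u := x) (v := y) (w := t - (y - x)) (z := t)
          hxy (by simp only [mem_Ioi] at ht; linarith) (le_of_lt ht) (by linarith) (by ring)
    _ = f y * ∫ t in Ioi x, f t := by
        rw [MeasureTheory.integral_const_mul, obfb_shiftIoi f hf_int y (y - x)]
        congr 2
        ring

theorem obfb_lemmaA (hf_nonneg : ∀ x, 0 ≤ f x) (hf_int : Integrable f) (hf_mass : ∫ x, f x = 1)
    (hf_symm : ∀ x, f (-x) = f x) (hf_diff : ContDiff ℝ 1 f)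
    (hf_logconc : ∀ x y : ℝ, ∀ a b : ℝ, 0 ≤ a → 0 ≤ b → a + b = 1 →
      f x ^ a * f y ^ b ≤ f (a * x + b * y))
    (hF : ∀ x, F x = ∫ t in Iic x, f t)
    (η : ℝ → ℝ) (hη : ∀ x, η x = f x ^ 2 / (F x * (1 - F x)))
    (hη_mono : ∀ a b : ℝ, |a| ≤ |b| → η b ≤ η a)
    {x y : ℝ} (hxy : x ≤ y) :
    f x - f y ≤ 2 * f 0 * Real.sqrt ((F y - F x) * (1 - (F y - F x))) := by
  have hp0 : 0 ≤ F x := obfb_F0 f F hf_nonneg hF x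
  have hp1 : F x ≤ 1 := obfb_F1 f F hf_nonneg hf_int hf_mass hF x
  have hq1 : F y ≤ 1 := obfb_F1 f F hf_nonneg hf_int hf_mass hF y
  have hQ0 : 0 ≤ F y - F x := sub_nonneg.mpr (obfb_Fmono f F hf_nonneg hf_int hF hxy)
  have hf00 : 0 ≤ 2 * f 0 := by nlinarith [hf_nonneg 0]
  rcases hp1.eq_or_lt with he | hlt
  · rw [obfb_L2 f F hf_nonneg hf_int hf_mass hf_diff hF he]
    have := hf_nonneg y
    nlinarith [Real.sqrt_nonneg ((F y - F x) * (1 - (F y - F x))), hf00]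
  have hE := obfb_claimE f F hf_nonneg hf_int hf_mass hf_logconc hF hxy
  have hkey := obfb_key f F hf_nonneg hf_int hf_mass hf_symm hf_diff hF η hη hη_mono x
  have step1 : (f x - f y) * (1 - F x) ≤ f x * (F y - F x) := by nlinarith [hE]
  have step2 : f x * (F y - F x) ≤
      2 * f 0 * Real.sqrt (F x * (1 - F x)) * (F y - F x) :=
    mul_le_mul_of_nonneg_right hkey hQ0
  have step3 : Real.sqrt (F x * (1 - F x)) * (F y - F x) ≤
      Real.sqrt ((F y - F x) * (1 - (F y - F x))) * (1 - F x) := by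
    rw [show Real.sqrt (F x * (1 - F x)) * (F y - F x)
        = Real.sqrt (F x * (1 - F x)) * Real.sqrt ((F y - F x)^2) by
          rw [Real.sqrt_sq hQ0],
      show Real.sqrt ((F y - F x) * (1 - (F y - F x))) * (1 - F x)
        = Real.sqrt ((F y - F x) * (1 - (F y - F x))) * Real.sqrt ((1 - F x)^2) by
          rw [Real.sqrt_sq (by linarith)],
      ← Real.sqrt_mul (by nlinarith) _, ← Real.sqrt_mul (by nlinarith) _]
    apply Real.sqrt_le_sqrt
    nlinarith [mul_nonneg (mul_nonneg hQ0 (by linarith : (0:ℝ) ≤ 1 - F x))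
      (by linarith : (0:ℝ) ≤ 1 - F x - (F y - F x))]
  have chain : (f x - f y) * (1 - F x) ≤
      (2 * f 0 * Real.sqrt ((F y - F x) * (1 - (F y - F x)))) * (1 - F x) := by
    calc (f x - f y) * (1 - F x) ≤ f x * (F y - F x) := step1
      _ ≤ 2 * f 0 * Real.sqrt (F x * (1 - F x)) * (F y - F x) := step2
      _ = 2 * f 0 * (Real.sqrt (F x * (1 - F x)) * (F y - F x)) := by ring
      _ ≤ 2 * f 0 * (Real.sqrt ((F y - F x) * (1 - (F y - F x))) * (1 - F x)) :=
          mul_le_mul_of_nonneg_left step3 hf00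
      _ = (2 * f 0 * Real.sqrt ((F y - F x) * (1 - (F y - F x)))) * (1 - F x) := by ring
  exact le_of_mul_le_mul_right chain (by linarith)

theorem obfb_pos_between
    (hf_logconc : ∀ x y : ℝ, ∀ a b : ℝ, 0 ≤ a → 0 ≤ b → a + b = 1 →
      f x ^ a * f y ^ b ≤ f (a * x + b * y))
    {u z p : ℝ} (hu : 0 < f u) (hz : 0 < f z) (hup : u ≤ p) (hpz : p ≤ z) : 0 < f p := by
  rcases eq_or_lt_of_le (hup.trans hpz) with hEq | huz
  · have : p = u := le_antisymm (hEq ▸ hpz) hup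
    rwa [this]
  have hne : z - u ≠ 0 := ne_of_gt (by linarith)
  have hA0 : 0 ≤ (z - p) / (z - u) := div_nonneg (by linarith) (by linarith)
  have hB0 : 0 ≤ (p - u) / (z - u) := div_nonneg (by linarith) (by linarith)
  have hAB : (z - p) / (z - u) + (p - u) / (z - u) = 1 := by field_simp; ring
  have h := hf_logconc u z _ _ hA0 hB0 hAB
  have hp : (z - p) / (z - u) * u + (p - u) / (z - u) * z = p := by
    rw [div_mul_eq_mul_div, div_mul_eq_mul_div, ← add_div, div_eq_iff hne]; ring
  rw [hp] at h
  calc (0:ℝ) < f u ^ ((z - p) / (z - u)) * f z ^ ((p - u) / (z - u)) :=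
        mul_pos (Real.rpow_pos_of_pos hu _) (Real.rpow_pos_of_pos hz _)
    _ ≤ f p := h

theorem obfb_lemma3 (hf_nonneg : ∀ x, 0 ≤ f x) (hf_int : Integrable f)
    (hf_diff : ContDiff ℝ 1 f)
    (hf_logconc : ∀ x y : ℝ, ∀ a b : ℝ, 0 ≤ a → 0 ≤ b → a + b = 1 →
      f x ^ a * f y ^ b ≤ f (a * x + b * y))
    (hF : ∀ x, F x = ∫ t in Iic x, f t)
    {x1 y1 x2 y2 : ℝ} (h11 : x1 ≤ y1) (h22 : x2 ≤ y2) (h12 : x1 ≤ x2)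
    (heq : F y1 - F x1 = F y2 - F x2) : f y2 - f x2 ≤ f y1 - f x1 := by
  have hc : Continuous f := hf_diff.continuous
  have hc' : Continuous (deriv f) := hf_diff.continuous_deriv le_rfl
  have ftc : ∀ p q : ℝ, ∫ t in p..q, deriv f t = f q - f p := fun p q =>
    intervalIntegral.integral_deriv_eq_sub (fun t _ => hf_diff.differentiable one_ne_zero t)
      (hc'.intervalIntegrable p q)
  rcases le_or_gt y1 y2 with hy | hy
  · -- main case
    set B1 := min x2 y1 with hB1
    set A2 := max x2 y1 with hA2
    have hxB : x1 ≤ B1 := le_min h12 h11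
    have hBA : B1 ≤ A2 := min_le_max
    have hAy : A2 ≤ y2 := max_le h22 hy
    have hfsum : f B1 + f A2 = f x2 + f y1 := by
      rcases le_total x2 y1 with h | h
      · rw [hB1, hA2, min_eq_left h, max_eq_right h]
      · rw [hB1, hA2, min_eq_right h, max_eq_left h]; ring
    have hFsum : F B1 + F A2 = F x2 + F y1 := by
      rcases le_total x2 y1 with h | h
      · rw [hB1, hA2, min_eq_left h, max_eq_right h]
      · rw [hB1, hA2, min_eq_right h, max_eq_left h]; ring
    have hm0 : 0 ≤ F B1 - F x1 := sub_nonneg.mpr (obfb_Fmono f F hf_nonneg hf_int hF hxB)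
    have hm2 : F y2 - F A2 = F B1 - F x1 := by linarith
    suffices hsuf : f y2 - f A2 ≤ f B1 - f x1 by linarith
    rcases hm0.eq_or_lt with hm | hm
    · -- zero mass
      have e1 : f B1 = f x1 := by
        rcases eq_or_lt_of_le hxB with hEq | hlt'
        · rw [hEq]
        · have hz := obfb_zero_on_Icc f hf_nonneg hf_diff hlt'
            (by rw [← obfb_Fdiff f F hf_int hF hxB]; linarith)
          rw [hz B1 ⟨hxB, le_rfl⟩, hz x1 ⟨le_rfl, hxB⟩]
      have e2 : f y2 = f A2 := by
        rcases eq_or_lt_of_le hAy with hEq | hlt'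
        · rw [hEq]
        · have hz := obfb_zero_on_Icc f hf_nonneg hf_diff hlt'
            (by rw [← obfb_Fdiff f F hf_int hF hAy]; linarith)
          rw [hz y2 ⟨hAy, le_rfl⟩, hz A2 ⟨le_rfl, hAy⟩]
      linarith
    · -- positive mass
      have hmassL : (∫ t in x1..B1, f t) = F B1 - F x1 :=
        (obfb_Fdiff f F hf_int hF hxB).symm
      have hmassR : (∫ t in A2..y2, f t) = F B1 - F x1 := by
        rw [← obfb_Fdiff f F hf_int hF hAy]; linarith
      have hu : ∃ u ∈ Icc x1 B1, 0 < f u := by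
        by_contra hcon
        push_neg at hcon
        have : (∫ t in x1..B1, f t) = 0 := by
          rw [show (0:ℝ) = ∫ t in x1..B1, (0:ℝ) by simp]
          apply intervalIntegral.integral_congr
          intro t ht
          rw [uIcc_of_le hxB] at ht
          exact le_antisymm (hcon t ht) (hf_nonneg t)
        rw [hmassL] at this; linarith
      have hz : ∃ z ∈ Icc A2 y2, 0 < f z := by
        by_contra hcon
        push_neg at hcon
        have : (∫ t in A2..y2, f t) = 0 := by
          rw [show (0:ℝ) = ∫ t in A2..y2, (0:ℝ) by simp]
          apply intervalIntegral.integral_congr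
          intro t ht
          rw [uIcc_of_le hAy] at ht
          exact le_antisymm (hcon t ht) (hf_nonneg t)
        rw [hmassR] at this; linarith
      obtain ⟨u, hu1, hu2⟩ := hu
      obtain ⟨z, hz1, hz2⟩ := hz
      have hfB : 0 < f B1 :=
        obfb_pos_between f hf_logconc hu2 hz2 hu1.2 (hBA.trans hz1.1)
      have hL : deriv f B1 / f B1 * (F B1 - F x1) ≤ f B1 - f x1 := by
        rw [← ftc x1 B1, ← hmassL, ← intervalIntegral.integral_const_mul]
        apply intervalIntegral.integral_mono_on hxB
          ((continuous_const.mul hc).intervalIntegrable x1 B1) (hc'.intervalIntegrable x1 B1)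
        intro t ht
        have := obfb_derivRatio f hf_nonneg hf_logconc hf_diff ht.2
        simp only [Pi.mul_apply]
        rw [div_mul_eq_mul_div, div_le_iff₀ hfB]
        nlinarith [this]
      have hR : f y2 - f A2 ≤ deriv f B1 / f B1 * (F B1 - F x1) := by
        rw [← ftc A2 y2, ← hmassR, ← intervalIntegral.integral_const_mul]
        apply intervalIntegral.integral_mono_on hAy (hc'.intervalIntegrable A2 y2)
          ((continuous_const.mul hc).intervalIntegrable A2 y2)
        intro t ht
        have := obfb_derivRatio f hf_nonneg hf_logconc hf_diff (hBA.trans ht.1)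
        simp only [Pi.mul_apply]
        rw [div_mul_eq_mul_div, le_div_iff₀ hfB]
        nlinarith [this]
      linarith
  · -- degenerate case y2 < y1
    have hF12 : F x1 ≤ F x2 := obfb_Fmono f F hf_nonneg hf_int hF h12
    have hFy21 : F y2 ≤ F y1 := obfb_Fmono f F hf_nonneg hf_int hF hy.le
    have hFy : F y1 = F y2 := le_antisymm (by linarith) hFy21
    have hFx : F x1 = F x2 := by linarith
    have e1 : f y1 = f y2 := by
      have hz := obfb_zero_on_Icc f hf_nonneg hf_diff hy
        (by rw [← obfb_Fdiff f F hf_int hF hy.le]; linarith)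
      rw [hz y1 ⟨hy.le, le_rfl⟩, hz y2 ⟨le_rfl, hy.le⟩]
    have e2 : f x1 = f x2 := by
      rcases eq_or_lt_of_le h12 with hEq | hlt'
      · rw [hEq]
      · have hz := obfb_zero_on_Icc f hf_nonneg hf_diff hlt'
          (by rw [← obfb_Fdiff f F hf_int hF h12]; linarith)
        rw [hz x1 ⟨le_rfl, h12⟩, hz x2 ⟨h12, le_rfl⟩]
    linarith

theorem obfb_lemmaM (hf_nonneg : ∀ x, 0 ≤ f x) (hf_int : Integrable f)
    (hf_diff : ContDiff ℝ 1 f)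
    (hf_logconc : ∀ x y : ℝ, ∀ a b : ℝ, 0 ≤ a → 0 ≤ b → a + b = 1 →
      f x ^ a * f y ^ b ≤ f (a * x + b * y))
    (hF : ∀ x, F x = ∫ t in Iic x, f t) :
    ∀ (k : ℕ) (t s : Fin k → ℝ), (∀ j, t j ≤ s j) → (∀ i j : Fin k, i < j → s i ≤ t j) →
    ∀ β : ℝ, (∀ j, s j ≤ β) →
    ∃ x y : ℝ, x ≤ y ∧ y ≤ β ∧ F y - F x = (∑ j, (F (s j) - F (t j))) ∧
      (∑ j, (f (t j) - f (s j))) ≤ f x - f y := by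
  intro k
  induction k with
  | zero =>
    intro t s _ _ β _
    exact ⟨β, β, le_rfl, le_rfl, by simp, by simp⟩
  | succ k ih =>
    intro t s hts hdisj β hβ
    set L : Fin (k+1) := Fin.last k with hL
    obtain ⟨x, y, hxy, hyβ, hFxy, hS⟩ :=
      ih (fun j => t j.castSucc) (fun j => s j.castSucc)
        (fun j => hts j.castSucc)
        (fun i j hij => hdisj i.castSucc j.castSucc (by simpa using hij))
        (t L) (fun j => hdisj j.castSucc L (Fin.castSucc_lt_last j))
    -- IVT to find x'
    have hcont : Continuous F := obfb_Fcont f F hf_int hf_diff hF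
    have hxt : x ≤ t L := hxy.trans hyβ
    have hmem : F (t L) - (F y - F x) ∈ Icc (F x) (F (t L)) := by
      constructor
      · have := obfb_Fmono f F hf_nonneg hf_int hF hyβ; linarith
      · have := obfb_Fmono f F hf_nonneg hf_int hF hxy; linarith
    obtain ⟨x', hx'mem, hFx'⟩ := intermediate_value_Icc hxt hcont.continuousOn hmem
    have h3 := obfb_lemma3 f F hf_nonneg hf_int hf_diff hf_logconc hF
      hxy hx'mem.2 hx'mem.1 (by linarith : F y - F x = F (t L) - F x')
    refine ⟨x', s L, hx'mem.2.trans (hts L), hβ L, ?_, ?_⟩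
    · rw [Fin.sum_univ_castSucc]
      have : F (s L) - F x' = (F y - F x) + (F (s L) - F (t L)) := by linarith
      rw [this, ← hFxy]
    · rw [Fin.sum_univ_castSucc]
      have : (∑ j : Fin k, (f (t j.castSucc) - f (s j.castSucc))) ≤ f x' - f (t L) := by
        linarith
      linarith

end OBFBAux

/-- the Fisher information of a one-bit measurement
`B = 1{X - θ ∈ A}` of a location family with symmetric log-concave density `f`
(with `η` non-increasing in `|x|`) is at most `4 f(0)²`, where `A` is a finite
union of disjoint intervals. -/
theorem one_bit_fisher_information_bound
    (f F η : ℝ → ℝ)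
    (hf_nonneg : ∀ x, 0 ≤ f x)
    (hf_int : Integrable f)
    (hf_mass : ∫ x, f x = 1)
    (hf_symm : ∀ x, f (-x) = f x)
    (hf_diff : ContDiff ℝ 1 f)
    (hf_logconc : ∀ x y : ℝ, ∀ a b : ℝ, 0 ≤ a → 0 ≤ b → a + b = 1 →
      f x ^ a * f y ^ b ≤ f (a * x + b * y))
    (hF : ∀ x, F x = ∫ t in Iic x, f t)
    (hη : ∀ x, η x = f x ^ 2 / (F x * (1 - F x)))
    (hη_mono : ∀ a b : ℝ, |a| ≤ |b| → η b ≤ η a)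
    (hη_max : ∀ a : ℝ, a ≠ 0 → η a < η 0)
    (k : ℕ) (a b : Fin k → ℝ)
    (hab : ∀ j, a j ≤ b j)
    (h_disj : ∀ i j : Fin k, i < j → b i ≤ a j)
    (θ : ℝ) (P dP : ℝ)
    (hP : P = ∑ j : Fin k, (F (b j - θ) - F (a j - θ)))
    (hdP : dP = ∑ j : Fin k, (f (a j - θ) - f (b j - θ)))
    (hP0 : 0 < P) (hP1 : P < 1) :
    dP ^ 2 / (P * (1 - P)) ≤ 4 * f 0 ^ 2 := by
  have hPP : 0 < P * (1 - P) := by nlinarith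
  rcases Nat.eq_zero_or_pos k with rfl | hk
  · simp at hP; rw [hP] at hP0; exact absurd hP0 (lt_irrefl 0)
  obtain ⟨k', rfl⟩ : ∃ k', k = k' + 1 := ⟨k - 1, (Nat.succ_pred_eq_of_pos hk).symm⟩
  set t : Fin (k'+1) → ℝ := fun j => a j - θ with ht
  set s : Fin (k'+1) → ℝ := fun j => b j - θ with hs
  have hts : ∀ j, t j ≤ s j := fun j => sub_le_sub_right (hab j) θ
  have hdisj : ∀ i j : Fin (k'+1), i < j → s i ≤ t j := fun i j hij =>
    sub_le_sub_right (h_disj i j hij) θ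
  -- upper bound for dP
  have hβ : ∀ j, s j ≤ s (Fin.last k') := by
    intro j
    rcases eq_or_lt_of_le (Fin.le_last j) with hEq | hlt
    · rw [hEq]
    · exact (hdisj j (Fin.last k') hlt).trans (hts _)
  obtain ⟨x, y, hxy, _, hFxy, hS⟩ :=
    obfb_lemmaM f F hf_nonneg hf_int hf_diff hf_logconc hF (k'+1) t s hts hdisj
      (s (Fin.last k')) hβ
  have hPsum : F y - F x = P := by rw [hFxy, hP]
  have hup : dP ≤ 2 * f 0 * Real.sqrt (P * (1 - P)) := by
    have hA := obfb_lemmaA f F hf_nonneg hf_int hf_mass hf_symm hf_diff hf_logconc hF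
      η hη hη_mono hxy
    rw [hPsum] at hA
    have : dP = ∑ j, (f (t j) - f (s j)) := hdP
    linarith
  -- lower bound via mirrored intervals
  set t' : Fin (k'+1) → ℝ := fun j => -(s j.rev) with ht'
  set s' : Fin (k'+1) → ℝ := fun j => -(t j.rev) with hs'
  have hts' : ∀ j, t' j ≤ s' j := fun j => neg_le_neg (hts j.rev)
  have hdisj' : ∀ i j : Fin (k'+1), i < j → s' i ≤ t' j := fun i j hij =>
    neg_le_neg (hdisj j.rev i.rev (Fin.rev_lt_rev.mpr hij))
  have hβ' : ∀ j, s' j ≤ s' (Fin.last k') := by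
    intro j
    rcases eq_or_lt_of_le (Fin.le_last j) with hEq | hlt
    · rw [hEq]
    · exact (hdisj' j (Fin.last k') hlt).trans (hts' _)
  obtain ⟨x2, y2, hxy2, _, hFxy2, hS2⟩ :=
    obfb_lemmaM f F hf_nonneg hf_int hf_diff hf_logconc hF (k'+1) t' s' hts' hdisj'
      (s' (Fin.last k')) hβ'
  have hrevsum : ∀ g : Fin (k'+1) → ℝ, (∑ j : Fin (k'+1), g (Fin.rev j)) = ∑ j, g j := fun g =>
    Fintype.sum_bijective Fin.rev Fin.rev_bijective _ _ (fun j => rfl)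
  have hPsum2 : F y2 - F x2 = P := by
    rw [hFxy2]
    have : ∀ j : Fin (k'+1), F (s' j) - F (t' j) = F (s j.rev) - F (t j.rev) := by
      intro j
      rw [hs', ht', obfb_Fneg f F hf_int hf_mass hf_symm hF,
        obfb_Fneg f F hf_int hf_mass hf_symm hF]
      ring
    rw [Finset.sum_congr rfl (fun j _ => this j),
      hrevsum (fun j => F (s j) - F (t j)), hP]
  have hdown : -dP ≤ 2 * f 0 * Real.sqrt (P * (1 - P)) := by
    have hA := obfb_lemmaA f F hf_nonneg hf_int hf_mass hf_symm hf_diff hf_logconc hF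
      η hη hη_mono hxy2
    rw [hPsum2] at hA
    have hsum2 : (∑ j, (f (t' j) - f (s' j))) = -dP := by
      have : ∀ j : Fin (k'+1), f (t' j) - f (s' j) = f (s j.rev) - f (t j.rev) := by
        intro j
        rw [hs', ht', hf_symm, hf_symm]
      rw [Finset.sum_congr rfl (fun j _ => this j),
        hrevsum (fun j => f (s j) - f (t j)), hdP]
      rw [← Finset.sum_neg_distrib]
      congr 1; funext j; ring
    linarith [hS2, hsum2 ▸ hS2]
  -- conclude
  have hM0 : 0 ≤ 2 * f 0 * Real.sqrt (P * (1 - P)) :=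
    mul_nonneg (by nlinarith [hf_nonneg 0]) (Real.sqrt_nonneg _)
  have hsq : dP ^ 2 ≤ (2 * f 0 * Real.sqrt (P * (1 - P)))^2 :=
    sq_le_sq' (by linarith) hup
  have hval : (2 * f 0 * Real.sqrt (P * (1 - P)))^2 = 4 * f 0 ^2 * (P * (1 - P)) := by
    rw [mul_pow, mul_pow, Real.sq_sqrt hPP.le]; ring
  rw [div_le_iff₀ hPP]
  nlinarith [hsq, hval]
end

section
/- Let f be Lipschitz with constant L and let a < b. Then |f(b) - f(a)| ≤ 2 √(L · ∫_a^b f(z) dz), where f is a nonnegative function. -/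
open MeasureTheory intervalIntegral

lemma aux_lip_bound (f : ℝ → ℝ) (L : ℝ) (hL : 0 < L)
    (hf_nonneg : ∀ x, 0 ≤ f x)
    (hf_lip : ∀ x y : ℝ, |f x - f y| ≤ L * |x - y|)
    (a b : ℝ) (hab : a < b)
    (hf_int : IntervalIntegrable f volume a b)
    (hfab : f a ≤ f b) :
    (f b - f a)^2 ≤ 2 * L * ∫ z in a..b, f z := by
  set D := f b - f a with hDdef
  have hD0 : 0 ≤ D := by simp [hDdef]; linarith
  have hDle : D ≤ L * (b - a) := by
    have h := hf_lip b a
    rw [abs_of_nonneg hD0, abs_of_nonneg (by linarith : (0:ℝ) ≤ b - a)] at h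
    exact h
  set c := b - D / L with hc
  have hac : a ≤ c := by
    have : D / L ≤ b - a := (div_le_iff₀ hL).mpr (by linarith [hDle])
    simp only [hc]; linarith
  have hcb : c ≤ b := by
    have : 0 ≤ D / L := div_nonneg hD0 hL.le
    simp only [hc]; linarith
  have hbc : b - c = D / L := by simp [hc]
  have hint2 : IntervalIntegrable f volume c b := hf_int.mono_set (by
    rw [Set.uIcc_of_le hcb, Set.uIcc_of_le hab.le]
    exact Set.Icc_subset_Icc hac le_rfl)
  have hint1 : IntervalIntegrable f volume a c := hf_int.mono_set (by
    rw [Set.uIcc_of_le hac, Set.uIcc_of_le hab.le]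
    exact Set.Icc_subset_Icc le_rfl hcb)
  have hsplit : (∫ z in a..c, f z) + (∫ z in c..b, f z) = ∫ z in a..b, f z :=
    intervalIntegral.integral_add_adjacent_intervals hint1 hint2
  have h1 : 0 ≤ ∫ z in a..c, f z :=
    intervalIntegral.integral_nonneg hac (fun x _ => hf_nonneg x)
  have hlin : IntervalIntegrable (fun x => f b - L * (b - x)) volume c b := by
    apply Continuous.intervalIntegrable
    continuity
  have h2 : (∫ z in c..b, (f b - L * (b - z))) ≤ ∫ z in c..b, f z := by
    apply intervalIntegral.integral_mono_on hcb hlin hint2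
    intro x hx
    have h := hf_lip b x
    rw [abs_of_nonneg (show (0:ℝ) ≤ b - x by linarith [hx.2])] at h
    have := le_trans (le_abs_self (f b - f x)) h
    linarith
  have hcalc : (∫ z in c..b, (f b - L * (b - z)))
      = (b - c) * f b - L * ((b - c)^2 / 2) := by
    have heq : (∫ z in c..b, (f b - L * (b - z)))
        = ∫ z in c..b, ((f b - L * b) + L * z) := by
      congr 1; ext z; ring
    rw [heq, intervalIntegral.integral_add (f := fun _ => f b - L * b) (g := fun z => L * z)
        (intervalIntegrable_const)
        ((continuous_const.mul continuous_id').intervalIntegrable _ _),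
      intervalIntegral.integral_const, intervalIntegral.integral_const_mul,
      integral_id]
    simp only [smul_eq_mul]
    ring
  have h3 : (b - c) * f b - L * ((b - c)^2 / 2) = (D * f b)/L - D^2/(2*L) := by
    rw [hbc]; field_simp
  have hfb : D ≤ f b := by
    have := hf_nonneg a
    simp only [hDdef]; linarith
  have hX : (D * f b)/L - D^2/(2*L) ≤ ∫ z in a..b, f z := by
    rw [← h3]
    linarith [h2, hcalc, hsplit, h1]
  have hmul : 2 * L * ((D * f b)/L - D^2/(2*L)) ≤ 2 * L * ∫ z in a..b, f z :=
    mul_le_mul_of_nonneg_left hX (by positivity)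
  have hval : 2 * L * ((D * f b)/L - D^2/(2*L)) = 2 * D * f b - D^2 := by
    field_simp
  have hD2 : D^2 ≤ D * f b := by nlinarith
  nlinarith [hmul, hval, hD2]

/-- for a nonnegative `L`-Lipschitz function `f` and `a < b`,
`|f(b) - f(a)| ≤ 2 √(L ∫_a^b f)`. -/
theorem lipschitz_density_diff_bound
    (f : ℝ → ℝ) (L : ℝ) (hL : 0 ≤ L)
    (hf_nonneg : ∀ x, 0 ≤ f x)
    (hf_lip : ∀ x y : ℝ, |f x - f y| ≤ L * |x - y|)
    (a b : ℝ) (hab : a < b)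
    (hf_int : IntervalIntegrable f volume a b) :
    |f b - f a| ≤ 2 * Real.sqrt (L * ∫ z in a..b, f z) := by
  rcases eq_or_lt_of_le hL with hL0 | hLpos
  · have h := hf_lip b a
    rw [← hL0, zero_mul] at h
    have h0 : |f b - f a| = 0 := le_antisymm h (abs_nonneg _)
    rw [h0]; positivity
  · have hIpos : 0 ≤ ∫ z in a..b, f z :=
      intervalIntegral.integral_nonneg hab.le (fun x _ => hf_nonneg x)
    have key : (f b - f a)^2 ≤ 2 * L * ∫ z in a..b, f z := by
      rcases le_total (f a) (f b) with h | h
      · exact aux_lip_bound f L hLpos hf_nonneg hf_lip a b hab hf_int h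
      · have hg := aux_lip_bound (fun x => f (a + b - x)) L hLpos
          (fun x => hf_nonneg _)
          (fun x y => by
            have := hf_lip (a + b - x) (a + b - y)
            convert this using 2
            rw [abs_sub_comm]; ring_nf)
          a b hab
          (by simpa using (hf_int.comp_sub_left (a + b)).symm)
          (by simpa using h)
        have hgI : (∫ z in a..b, f (a + b - z)) = ∫ z in a..b, f z := by
          rw [intervalIntegral.integral_comp_sub_left f (a + b)]
          norm_num
        simp only [hgI] at hg
        have heq : (f b - f a)^2 = (f (a + b - b) - f (a + b - a))^2 := by
          norm_num; ring
        rw [heq]; exact hg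
    have h4 : |f b - f a|^2 ≤ 4 * (L * ∫ z in a..b, f z) := by
      rw [sq_abs]
      nlinarith [mul_nonneg hL hIpos]
    have hs : Real.sqrt (4 * (L * ∫ z in a..b, f z))
        = 2 * Real.sqrt (L * ∫ z in a..b, f z) := by
      rw [show (4:ℝ) = 2^2 by norm_num, Real.sqrt_mul (by positivity),
        Real.sqrt_sq (by norm_num)]
    rw [← hs]
    exact (Real.le_sqrt (abs_nonneg _) (by positivity)).mpr h4
end

section
/- Let f be a nonnegative L-Lipschitz function, and let A = ∪_{i=1}^k [aᵢ, bᵢ] be a disjoint union of k intervals with Σᵢ ∫_{aᵢ}^{bᵢ} f ≤ 1. Then |Σ_{i=1}^k (f(aᵢ) - f(bᵢ))| ≤ 2 √(kL). -/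
open MeasureTheory intervalIntegral

lemma key_one_sided (f : ℝ → ℝ) (L : ℝ) (hL : 0 ≤ L)
    (hf_nonneg : ∀ x, 0 ≤ f x)
    (hf_lip : ∀ x y : ℝ, |f x - f y| ≤ L * |x - y|)
    (a b : ℝ) (hab : a ≤ b) (hint : IntervalIntegrable f volume a b)
    (hfb : f b ≤ f a) :
    (f a - f b)^2 ≤ 2 * L * ∫ z in a..b, f z := by
  rcases eq_or_lt_of_le hL with hL0 | hLpos
  · have h := hf_lip a b
    rw [← hL0] at h
    simp at h
    rw [← hL0, h]
    simp
  · obtain ⟨d, hd⟩ : ∃ d, d = f a - f b := ⟨_, rfl⟩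
    have hd0 : 0 ≤ d := by rw [hd]; linarith
    have hdL : d ≤ L * (b - a) := by
      have h := hf_lip a b
      rw [← hd, abs_of_nonneg hd0] at h
      calc d ≤ L * |a - b| := h
        _ = L * (b - a) := by rw [abs_of_nonpos (by linarith)]; ring
    obtain ⟨e, he⟩ : ∃ e, e = a + d / L := ⟨_, rfl⟩
    have hu0 : 0 ≤ d / L := div_nonneg hd0 hL
    have hae : a ≤ e := by rw [he]; linarith
    have heb : e ≤ b := by
      have : d / L ≤ b - a := (div_le_iff₀ hLpos).mpr (by linarith)
      rw [he]; linarith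
    have hsub : IntervalIntegrable f volume a e :=
      hint.mono_set (by rw [Set.uIcc_of_le hae, Set.uIcc_of_le hab]
                        exact Set.Icc_subset_Icc le_rfl heb)
    have hsub2 : IntervalIntegrable f volume e b :=
      hint.mono_set (by rw [Set.uIcc_of_le heb, Set.uIcc_of_le hab]
                        exact Set.Icc_subset_Icc hae le_rfl)
    have hlin : IntervalIntegrable (fun x => f a - L * (x - a)) volume a e :=
      (Continuous.intervalIntegrable (by continuity) a e)
    have hmono : ∫ x in a..e, (f a - L * (x - a)) ≤ ∫ x in a..e, f x := by
      apply integral_mono_on hae hlin hsub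
      intro x hx
      have h := hf_lip x a
      have hxa : a ≤ x := hx.1
      rw [abs_of_nonneg (by linarith : (0:ℝ) ≤ x - a)] at h
      have := abs_le.mp h
      linarith [this.1]
    have hsplit : ∫ x in a..e, f x ≤ ∫ x in a..b, f x := by
      have : (∫ x in a..e, f x) + ∫ x in e..b, f x = ∫ x in a..b, f x :=
        integral_add_adjacent_intervals hsub hsub2
      have hnn : 0 ≤ ∫ x in e..b, f x :=
        intervalIntegral.integral_nonneg heb (fun x _ => hf_nonneg x)
      linarith
    have hcomp : ∫ x in a..e, (f a - L * (x - a)) = f a * (d/L) - L * (d/L)^2 / 2 := by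
      have h1 : ∫ x in a..e, (x - a) = (e - a)^2 / 2 := by
        rw [integral_comp_sub_right (fun x => x) a, integral_id]
        ring
      rw [integral_sub (Continuous.intervalIntegrable (by continuity) a e)
            (Continuous.intervalIntegrable (by continuity) a e),
          intervalIntegral.integral_const, intervalIntegral.integral_const_mul, h1]
      rw [he]
      simp only [smul_eq_mul]
      ring
    have hfa : d ≤ f a := by have := hf_nonneg b; rw [hd]; linarith
    have hI : f a * (d/L) - L * (d/L)^2 / 2 ≤ ∫ x in a..b, f x := by
      rw [← hcomp]; linarith
    have hLu : L * (d / L) = d := by field_simp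
    rw [← hd]
    nlinarith [mul_le_mul_of_nonneg_right hfa hu0,
      mul_le_mul_of_nonneg_left hI hL, sq_nonneg (d/L)]

lemma key_two_sided (f : ℝ → ℝ) (L : ℝ) (hL : 0 ≤ L)
    (hf_nonneg : ∀ x, 0 ≤ f x)
    (hf_lip : ∀ x y : ℝ, |f x - f y| ≤ L * |x - y|)
    (a b : ℝ) (hab : a ≤ b) (hint : IntervalIntegrable f volume a b) :
    (f a - f b)^2 ≤ 2 * L * ∫ z in a..b, f z := by
  rcases le_total (f b) (f a) with h | h
  · exact key_one_sided f L hL hf_nonneg hf_lip a b hab hint h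
  · have hg_int : IntervalIntegrable (fun x => f (a + b - x)) volume a b := by
      have := (hint.comp_sub_left (a+b)).symm
      simpa using this
    have hkey := key_one_sided (fun x => f (a + b - x)) L hL
      (fun x => hf_nonneg _)
      (fun x y => by
        have := hf_lip (a + b - x) (a + b - y)
        simpa [abs_sub_comm, show a + b - x - (a + b - y) = y - x by ring,
          abs_sub_comm y x] using this)
      a b hab hg_int
      (by simpa using h)
    have hgi : (∫ x in a..b, f (a + b - x)) = ∫ x in a..b, f x := by
      rw [integral_comp_sub_left f (a+b)]
      simp
    simp only [show a + b - a = b by ring, show a + b - b = a by ring, hgi] at hkey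
    calc (f a - f b)^2 = (f b - f a)^2 := by ring
      _ ≤ 2 * L * ∫ z in a..b, f z := hkey

/-- for a nonnegative `L`-Lipschitz function `f` and a disjoint
union of `k` intervals `[aᵢ, bᵢ]` of total `f`-mass at most 1,
`|Σᵢ (f(aᵢ) - f(bᵢ))| ≤ 2 √(kL)`. -/
theorem lipschitz_density_interval_sum_bound
    (f : ℝ → ℝ) (L : ℝ) (hL : 0 ≤ L)
    (hf_nonneg : ∀ x, 0 ≤ f x)
    (hf_lip : ∀ x y : ℝ, |f x - f y| ≤ L * |x - y|)
    (k : ℕ) (a b : Fin k → ℝ)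
    (hab : ∀ i, a i ≤ b i)
    (h_disj : ∀ i j : Fin k, i < j → b i ≤ a j)
    (hf_int : ∀ i, IntervalIntegrable f volume (a i) (b i))
    (h_mass : ∑ i : Fin k, ∫ z in (a i)..(b i), f z ≤ 1) :
    |∑ i : Fin k, (f (a i) - f (b i))| ≤ 2 * Real.sqrt (k * L) := by
  have hsq : ∑ i : Fin k, (f (a i) - f (b i))^2 ≤ 2 * L := by
    calc ∑ i : Fin k, (f (a i) - f (b i))^2
        ≤ ∑ i : Fin k, 2 * L * ∫ z in (a i)..(b i), f z :=
          Finset.sum_le_sum fun i _ =>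
            key_two_sided f L hL hf_nonneg hf_lip (a i) (b i) (hab i) (hf_int i)
      _ = 2 * L * ∑ i : Fin k, ∫ z in (a i)..(b i), f z := by
          rw [Finset.mul_sum]
      _ ≤ 2 * L * 1 := by
          apply mul_le_mul_of_nonneg_left h_mass (by linarith)
      _ = 2 * L := by ring
  have hCS : (∑ i : Fin k, (f (a i) - f (b i)))^2 ≤
      (k : ℝ) * ∑ i : Fin k, (f (a i) - f (b i))^2 := by
    simpa using sq_sum_le_card_mul_sum_sq (s := (Finset.univ : Finset (Fin k)))
      (f := fun i => f (a i) - f (b i))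
  have h4 : (∑ i : Fin k, (f (a i) - f (b i)))^2 ≤ 4 * ((k : ℝ) * L) := by
    have hk : (0:ℝ) ≤ (k:ℝ) := Nat.cast_nonneg k
    nlinarith [mul_le_mul_of_nonneg_left hsq hk]
  have := Real.abs_le_sqrt h4
  calc |∑ i : Fin k, (f (a i) - f (b i))| ≤ Real.sqrt (4 * ((k:ℝ) * L)) := this
    _ = 2 * Real.sqrt ((k:ℝ) * L) := by
        rw [Real.sqrt_mul (by norm_num) ((k:ℝ) * L),
          show (4:ℝ) = 2^2 by norm_num, Real.sqrt_sq (by norm_num)]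
end

section
/- Let Z have density f that is L-Lipschitz with median 0 and f(0) > 0. Then for all x ∈ ℝ, E[|sgn(Z) - sgn(x + Z)|] ≤ 4 f(0)|x| + 2L x². -/
open MeasureTheory Set

lemma meas_sign : Measurable Real.sign := by
  have : Real.sign = fun r => if r < 0 then (-1:ℝ) else if 0 < r then 1 else 0 := by
    ext r; rw [Real.sign]
  rw [this]
  exact Measurable.ite (measurableSet_lt measurable_id measurable_const) measurable_const
    (Measurable.ite (measurableSet_lt measurable_const measurable_id) measurable_const
      measurable_const)

lemma abs_sign_le (r : ℝ) : |Real.sign r| ≤ 1 := by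
  rcases Real.sign_apply_eq r with h | h | h <;> rw [h] <;> norm_num

lemma int_abs (a : ℝ) (ha : 0 ≤ a) : ∫ z in (-a)..a, |z| = a^2 := by
  have h1 : ∫ z in (-a)..(0:ℝ), |z| = a^2/2 := by
    rw [intervalIntegral.integral_congr (g := fun z => -z) ?_]
    · rw [intervalIntegral.integral_neg, integral_id]; ring
    · intro z hz
      rw [uIcc_of_le (by linarith)] at hz
      exact abs_of_nonpos hz.2
  have h2 : ∫ z in (0:ℝ)..a, |z| = a^2/2 := by
    rw [intervalIntegral.integral_congr (g := fun z => z) ?_]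
    · rw [integral_id]; ring
    · intro z hz
      rw [uIcc_of_le ha] at hz
      exact abs_of_nonneg hz.1
  rw [← intervalIntegral.integral_add_adjacent_intervals (b := 0)
    (continuous_abs.intervalIntegrable _ _) (continuous_abs.intervalIntegrable _ _), h1, h2]
  ring

/-- for `Z` with `L`-Lipschitz density `f` and median `0`,
`E[|sgn(Z) - sgn(x + Z)|] ≤ 4 f(0)|x| + 2 L x²`. -/
theorem sgn_difference_expectation_bound
    (f F : ℝ → ℝ) (L : ℝ) (hL : 0 ≤ L)
    (hf_nonneg : ∀ x, 0 ≤ f x)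
    (hf_int : Integrable f)
    (hf_mass : ∫ x, f x = 1)
    (hf_lip : ∀ x y : ℝ, |f x - f y| ≤ L * |x - y|)
    (hF : ∀ x, F x = ∫ t in Iic x, f t)
    (h_med : F 0 = 1 / 2)
    (hf0 : 0 < f 0) :
    ∀ x : ℝ,
      ∫ z, |Real.sign z - Real.sign (x + z)| * f z ≤ 4 * f 0 * |x| + 2 * L * x ^ 2 := by
  intro x
  set a := |x| with ha_def
  have ha : 0 ≤ a := abs_nonneg x
  set g : ℝ → ℝ := fun z => |Real.sign z - Real.sign (x + z)| * f z with hg_def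
  have hg_nonneg : ∀ z, 0 ≤ g z := fun z => mul_nonneg (abs_nonneg _) (hf_nonneg z)
  have hg_le : ∀ z, g z ≤ 2 * f z := by
    intro z
    have : |Real.sign z - Real.sign (x + z)| ≤ 2 := by
      calc |Real.sign z - Real.sign (x + z)| ≤ |Real.sign z| + |Real.sign (x+z)| :=
            abs_sub _ _
        _ ≤ 1 + 1 := add_le_add (abs_sign_le _) (abs_sign_le _)
        _ = 2 := by norm_num
    exact mul_le_mul_of_nonneg_right this (hf_nonneg z)
  have hg_meas : AEStronglyMeasurable g volume :=
    (((meas_sign.sub (meas_sign.comp (measurable_id.const_add x))).abs).aestronglyMeasurable).mul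
      hf_int.1
  have hg_int : Integrable g := by
    refine (hf_int.const_mul 2).mono hg_meas (ae_of_all _ fun z => ?_)
    rw [Real.norm_eq_abs, Real.norm_eq_abs, abs_of_nonneg (hg_nonneg z),
      abs_of_nonneg (mul_nonneg (by norm_num) (hf_nonneg z))]
    exact hg_le z
  have hptwise : ∀ z, g z ≤ Set.indicator (Icc (-a) a) (fun z => 2 * f z) z := by
    intro z
    by_cases hz : z ∈ Icc (-a) a
    · rw [Set.indicator_of_mem hz]; exact hg_le z
    · rw [Set.indicator_of_notMem hz]
      have habs : a < |z| := by
        rcases lt_or_ge a |z| with h | h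
        · exact h
        · exact absurd (abs_le.mp h |>.imp id id |> fun ⟨h1, h2⟩ => ⟨h1, h2⟩) hz
      have hsgn : Real.sign z = Real.sign (x + z) := by
        rcases lt_or_ge z 0 with hz0 | hz0
        · have h1 : x + z < 0 := by
            have hza : z < -a := by rw [abs_of_neg hz0] at habs; linarith
            have := le_abs_self x
            rw [← ha_def] at this
            linarith
          rw [Real.sign_of_neg hz0, Real.sign_of_neg h1]
        · have hz0' : 0 < z := by
            rcases hz0.lt_or_eq with h | h
            · exact h
            · exfalso; rw [← h] at habs; simp at habs; linarith
          have h1 : 0 < x + z := by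
            have : a < z := by rwa [abs_of_pos hz0'] at habs
            have := neg_abs_le x
            rw [← ha_def] at this
            linarith
          rw [Real.sign_of_pos hz0', Real.sign_of_pos h1]
      simp [hg_def, hsgn, sub_self]
  have hind_int : Integrable (Set.indicator (Icc (-a) a) (fun z => 2 * f z)) :=
    ((hf_int.const_mul 2).indicator measurableSet_Icc)
  have step1 : ∫ z, g z ≤ ∫ z, Set.indicator (Icc (-a) a) (fun z => 2 * f z) z :=
    integral_mono hg_int hind_int hptwise
  rw [integral_indicator measurableSet_Icc] at step1
  have hcont : Continuous (fun z : ℝ => 2 * f 0 + 2 * L * |z|) := by continuity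
  have step2 : ∫ z in Icc (-a) a, 2 * f z ≤ ∫ z in Icc (-a) a, (2 * f 0 + 2 * L * |z|) := by
    refine setIntegral_mono_on (hf_int.const_mul 2).integrableOn
      (hcont.integrableOn_Icc) measurableSet_Icc fun z hz => ?_
    have := hf_lip z 0
    rw [sub_zero] at this
    have h2 : f z - f 0 ≤ L * |z| := le_trans (le_abs_self _) this
    linarith
  have step3 : ∫ z in Icc (-a) a, (2 * f 0 + 2 * L * |z|) = 4 * f 0 * a + 2 * L * a ^ 2 := by
    rw [integral_Icc_eq_integral_Ioc,
      ← intervalIntegral.integral_of_le (by linarith : -a ≤ a)]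
    rw [intervalIntegral.integral_add (g := fun z => 2 * L * |z|) (intervalIntegrable_const)
      ((continuous_const.mul continuous_abs : Continuous fun z : ℝ => 2 * L * |z|).intervalIntegrable _ _)]
    rw [intervalIntegral.integral_const, intervalIntegral.integral_const_mul, int_abs a ha]
    simp [smul_eq_mul]; ring
  have : a ^ 2 = x ^ 2 := sq_abs x
  calc ∫ z, g z ≤ ∫ z in Icc (-a) a, (2 * f 0 + 2 * L * |z|) := le_trans step1 step2
    _ = 4 * f 0 * a + 2 * L * a ^ 2 := step3
    _ = 4 * f 0 * |x| + 2 * L * x ^ 2 := by rw [this]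
end

section
/- Let D* > 0 satisfy n = (1/2) log₂[ (σ_θ²/D*) · (D* n / (D* n - σ² + D* σ²/σ_θ²))^n ] for the Gaussian CEO problem with unit rate per terminal. Then as n → ∞, D* = 4σ²/(3n) + o(1/n); in particular n·D* → 4σ²/3. -/
open Filter Real

lemma ceo_key (σ2 σθ2 : ℝ) (hσ2 : 0 < σ2) (hσθ2 : 0 < σθ2)
    (d : ℝ) (hd : 0 < d) (n : ℕ) (hn : 1 ≤ n)
    (hden : 0 < d * n - σ2 + d * σ2 / σθ2)
    (heq : (n : ℝ) = (1 / 2) * Real.logb 2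
      ((σθ2 / d) * (d * n / (d * n - σ2 + d * σ2 / σθ2)) ^ n)) :
    1 < d * n / (d * n - σ2 + d * σ2 / σθ2) ∧
    d * n / (d * n - σ2 + d * σ2 / σθ2) < 4 ∧
    (d * n / (d * n - σ2 + d * σ2 / σθ2)) ^ n = 4 ^ n * (d / σθ2) ∧
    σ2 / (σ2 + n * σθ2) < d / σθ2 ∧
    (n : ℝ) * d = σ2 * (d * n / (d * n - σ2 + d * σ2 / σθ2)) /
      ((d * n / (d * n - σ2 + d * σ2 / σθ2) - 1)
        + σ2 * (d * n / (d * n - σ2 + d * σ2 / σθ2)) / (n * σθ2)) := by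
  set den : ℝ := d * n - σ2 + d * σ2 / σθ2 with hden_def
  have hnR : (0:ℝ) < n := by exact_mod_cast hn
  have hx : (0:ℝ) < d * n := by positivity
  set t : ℝ := d * n / den with ht_def
  have ht0 : 0 < t := div_pos hx hden
  set u : ℝ := d / σθ2 with hu_def
  have hu0 : 0 < u := div_pos hd hσθ2
  have huσ : u * σθ2 = d := by rw [hu_def]; field_simp
  clear_value den t u
  -- step 1: exponential form
  have hA : 0 < (σθ2 / d) * t ^ n := by positivity
  have hlog : Real.logb 2 ((σθ2 / d) * t ^ n) = 2 * n := by
    rw [heq]; ring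
  have hApow : (σθ2 / d) * t ^ n = 4 ^ n := by
    have h1 : (2:ℝ) ^ (Real.logb 2 ((σθ2 / d) * t ^ n)) = (σθ2 / d) * t ^ n :=
      Real.rpow_logb (by norm_num) (by norm_num) hA
    rw [hlog] at h1
    have h2 : (2:ℝ) ^ ((2 * n : ℕ) : ℝ) = (2:ℝ) ^ (2 * n : ℕ) := Real.rpow_natCast 2 (2*n)
    have h3 : ((2 * n : ℕ) : ℝ) = 2 * (n:ℝ) := by push_cast; ring
    rw [← h3, h2] at h1
    rw [← h1, pow_mul]; norm_num
  have htn : t ^ n = 4 ^ n * u := by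
    have h1 : σθ2 * t ^ n = 4 ^ n * d := by
      field_simp [ne_of_gt hd] at hApow; linarith
    rw [← huσ] at h1
    have := mul_left_cancel₀ (ne_of_gt hσθ2) (show σθ2 * t ^ n = σθ2 * (4 ^ n * u) by
      rw [h1]; ring)
    exact this
  -- step 2: 1 < t
  have ht1 : 1 < t := by
    by_contra h
    push_neg at h
    have htn1 : t ^ n ≤ 1 := pow_le_one₀ (le_of_lt ht0) h
    have h4n : (1:ℝ) < 4 ^ n := one_lt_pow₀ (by norm_num) (by omega)
    have hu1 : u < 1 := by nlinarith [htn ▸ htn1]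
    have hds : d * σ2 / σθ2 < σ2 := by
      have h5 : u * σ2 < σ2 := by nlinarith
      have h6 : d * σ2 / σθ2 = u * σ2 := by
        rw [← huσ]; field_simp
      linarith
    have hdenlt : den < d * n := by rw [hden_def]; linarith
    have : 1 < t := ht_def ▸ (one_lt_div hden).2 hdenlt
    linarith
  -- step 3: t < 4, u < 1
  have hdenlt : den < d * n := (one_lt_div hden).1 (ht_def ▸ ht1)
  have hu1 : u < 1 := by
    have h5 : d * σ2 / σθ2 < σ2 := by rw [hden_def] at hdenlt; linarith
    have h6 : d * σ2 / σθ2 = u * σ2 := by rw [← huσ]; field_simp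
    nlinarith [h6 ▸ h5]
  have ht4 : t < 4 := by
    by_contra h
    push_neg at h
    have : (4:ℝ) ^ n ≤ t ^ n := pow_le_pow_left₀ (by norm_num) h n
    nlinarith [pow_pos (show (0:ℝ) < 4 by norm_num) n]
  -- step 4: key identity
  have hiden : t * den = d * n := by rw [ht_def]; field_simp
  have hden_eq : den = d * n - σ2 + u * σ2 := by
    rw [hden_def, ← huσ]; field_simp
  have hid : d * n * (t - 1) = σ2 * (1 - u) * t := by
    linear_combination hiden - t * hden_eq
  have hx_eq : d * (n:ℝ) = (n:ℝ) * σθ2 * u := by rw [← huσ]; ring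
  have hueq : u * ((n:ℝ) * σθ2 * (t - 1) + σ2 * t) = σ2 * t := by
    linear_combination hid - (t - 1) * hx_eq
  have hulb : σ2 / (σ2 + n * σθ2) < u := by
    rw [div_lt_iff₀ (by positivity)]
    nlinarith [hueq, mul_pos hu0 (mul_pos hnR hσθ2), ht1, ht0]
  refine ⟨ht1, ht4, htn, hulb, ?_⟩
  have hdpos : 0 < (t - 1) + σ2 * t / (n * σθ2) := add_pos (by linarith) (by positivity)
  rw [eq_div_iff (ne_of_gt hdpos)]
  have step : (n:ℝ) * d * ((t - 1) + σ2 * t / (n * σθ2))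
      = u * ((n:ℝ) * σθ2 * (t - 1) + σ2 * t) := by
    rw [← huσ]; field_simp
  rw [step, hueq]

/-- Gaussian CEO asymptotics: if `D* = D*(n) > 0` solves
`n = (1/2) log₂[(σ_θ²/D*) (D* n / (D* n - σ² + D* σ²/σ_θ²))^n]` (for all large
`n`, where the denominator is positive), then `n · D*(n) → 4σ²/3`. -/
theorem ceo_distortion_asymptotics
    (σ2 σθ2 : ℝ) (hσ2 : 0 < σ2) (hσθ2 : 0 < σθ2)
    (D : ℕ → ℝ) (hD_pos : ∀ n, 0 < D n)
    (h_denom : ∀ᶠ n : ℕ in atTop,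
      0 < D n * n - σ2 + D n * σ2 / σθ2)
    (h_eq : ∀ᶠ n : ℕ in atTop,
      (n : ℝ) = (1 / 2) * Real.logb 2
        ((σθ2 / D n) *
          (D n * n / (D n * n - σ2 + D n * σ2 / σθ2)) ^ (n : ℕ))) :
    Tendsto (fun n : ℕ => (n : ℝ) * D n) atTop (nhds (4 * σ2 / 3)) := by
  set t : ℕ → ℝ := fun n => D n * n / (D n * n - σ2 + D n * σ2 / σθ2) with ht_def
  have hkey : ∀ᶠ n : ℕ in atTop,
      1 < t n ∧ t n < 4 ∧ (t n) ^ n = 4 ^ n * (D n / σθ2) ∧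
      σ2 / (σ2 + n * σθ2) < D n / σθ2 ∧
      (n : ℝ) * D n = σ2 * t n / ((t n - 1) + σ2 * t n / (n * σθ2)) := by
    filter_upwards [h_denom, h_eq, eventually_ge_atTop 1] with n h1 h2 h3
    exact ceo_key σ2 σθ2 hσ2 hσθ2 (D n) (hD_pos n) n h3 h1 h2
  -- t → 4
  have ht_lim : Tendsto t atTop (nhds 4) := by
    rw [tendsto_order]
    constructor
    · intro a ha
      rcases le_or_gt a 1 with h | h
      · filter_upwards [hkey] with n hk
        exact lt_of_le_of_lt h hk.1
      · set q : ℝ := a / 4 with hq_def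
        have hq0 : 0 < q := by rw [hq_def]; linarith
        have hq1 : q < 1 := by rw [hq_def]; linarith
        have hlim0 : Tendsto (fun n : ℕ => σ2 * q ^ n + σθ2 * (n * q ^ n))
            atTop (nhds 0) := by
          have l1 := (tendsto_pow_atTop_nhds_zero_of_lt_one hq0.le hq1).const_mul σ2
          have l2 := (tendsto_self_mul_const_pow_of_lt_one hq0.le hq1).const_mul σθ2
          simpa using l1.add l2
        have hev : ∀ᶠ n : ℕ in atTop, σ2 * q ^ n + σθ2 * (n * q ^ n) < σ2 :=
          hlim0.eventually_lt_const hσ2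
        filter_upwards [hkey, hev] with n hk h2
        by_contra hc
        push_neg at hc
        obtain ⟨ht1, ht4, htn, hulb, _⟩ := hk
        have h4n : (0:ℝ) < 4 ^ n := by positivity
        have htq : (t n) ^ n ≤ a ^ n := pow_le_pow_left₀ (by linarith) hc n
        have hqan : a ^ n = q ^ n * 4 ^ n := by
          rw [hq_def, div_pow]; field_simp
        have hule : D n / σθ2 ≤ q ^ n := by
          rw [htn, hqan] at htq; nlinarith
        have hnn : (0:ℝ) ≤ (n:ℝ) := Nat.cast_nonneg n
        rw [div_lt_iff₀ (by positivity)] at hulb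
        nlinarith [mul_le_mul_of_nonneg_right hule (show (0:ℝ) ≤ σ2 + n * σθ2 by positivity)]
    · intro b hb
      filter_upwards [hkey] with n hk
      exact lt_trans hk.2.1 hb
  -- the small term → 0
  have hsmall : Tendsto (fun n : ℕ => σ2 * t n / (n * σθ2)) atTop (nhds 0) := by
    apply squeeze_zero' (g := fun n : ℕ => 4 * σ2 / σθ2 * (1 / n))
    · filter_upwards [hkey, eventually_ge_atTop 1] with n hk hn
      have hn0 : (0:ℝ) < n := by exact_mod_cast hn
      have ht0 : (0:ℝ) < t n := by linarith [hk.1]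
      positivity
    · filter_upwards [hkey, eventually_ge_atTop 1] with n hk hn
      have hn0 : (0:ℝ) < n := by exact_mod_cast hn
      rw [div_le_iff₀ (by positivity)]
      have : σ2 * t n ≤ 4 * σ2 := by nlinarith [hk.1, hk.2.1]
      calc σ2 * t n ≤ 4 * σ2 := this
        _ = 4 * σ2 / σθ2 * (1 / n) * (n * σθ2) := by field_simp
    · have := tendsto_one_div_atTop_nhds_zero_nat.const_mul (4 * σ2 / σθ2)
      simpa using this
  -- combine
  have hden_lim : Tendsto (fun n : ℕ => (t n - 1) + σ2 * t n / (n * σθ2))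
      atTop (nhds 3) := by
    have := (ht_lim.sub_const 1).add hsmall
    norm_num at this
    exact this
  have hfinal : Tendsto (fun n : ℕ => σ2 * t n / ((t n - 1) + σ2 * t n / (n * σθ2)))
      atTop (nhds (4 * σ2 / 3)) := by
    have := (ht_lim.const_mul σ2).div hden_lim (by norm_num)
    convert this using 2
    · rfl
    · ring
  refine Tendsto.congr' ?_ hfinal
  filter_upwards [hkey] with n hk
  exact hk.2.2.2.2.symm
end
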